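/- arXiv:1906.12269 — 9 statements merged into one kernel-verified Lean document; each statement's English description precedes it below -/
import Mathlib

section
/- Weak duality for the relaxed problem: For every dual-feasible choice of variables (matrices Ω^{(l)} with entries in [0,1] for l = 2,…,L−1, η ∈ ℝ^N with η ≥ 0, and ρ ≥ 0) and every primal-feasible point (X̃ ∈ X̂_{q,Q}(X) and (H,Ĥ) ∈ Z(X̃)), one has g(X, c, Ω, η, ρ) ≤ c · Ĥ^{(L)}. -/
open scoped BigOperators

/-- The admissible (binary, `L0`-constrained) perturbation set `X_{q,Q}(X)`:
binary matrices differing from `X` in at most `Q` entries overall and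
in at most `q` entries in every row. -/
def XsetBin {N D : ℕ} (X : Matrix (Fin N) (Fin D) ℝ) (q Q : ℕ) :
    Set (Matrix (Fin N) (Fin D) ℝ) :=
  {Xt | (∀ n d, Xt n d = 0 ∨ Xt n d = 1) ∧
    (Finset.univ.filter fun p : Fin N × Fin D => Xt p.1 p.2 ≠ X p.1 p.2).card ≤ Q ∧
    ∀ n, (Finset.univ.filter fun d : Fin D => Xt n d ≠ X n d).card ≤ q}

/-- The relaxed (`[0,1]`-valued, `L1`-constrained) perturbation set `X̂_{q,Q}(X)`. -/
def XsetRel {N D : ℕ} (X : Matrix (Fin N) (Fin D) ℝ) (q Q : ℕ) :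
    Set (Matrix (Fin N) (Fin D) ℝ) :=
  {Xt | (∀ n d, 0 ≤ Xt n d ∧ Xt n d ≤ 1) ∧
    (∑ n, ∑ d, |Xt n d - X n d|) ≤ (Q : ℝ) ∧
    ∀ n, (∑ d, |Xt n d - X n d|) ≤ (q : ℝ)}

/-- An `L`-layer sliced ReLU GNN with `L = ℓ + 2 ≥ 2` layers.
`nd l` is the number of node rows at layer `l` and `fd l` the feature dimension at
layer `l`; the message passing matrices `A l`, weights `W l` and biases `b l` are
used for `l = 1, …, ℓ + 1`.  The last message passing matrix has a single row. -/
structure SlicedGNN (ℓ : ℕ) where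
  nd : ℕ → ℕ
  fd : ℕ → ℕ
  A : (l : ℕ) → Matrix (Fin (nd (l + 1))) (Fin (nd l)) ℝ
  W : (l : ℕ) → Matrix (Fin (fd l)) (Fin (fd (l + 1))) ℝ
  b : (l : ℕ) → Fin (fd (l + 1)) → ℝ
  A_nonneg : ∀ l i j, 0 ≤ A l i j
  last_single : nd (ℓ + 2) = 1

namespace SlicedGNN

variable {ℓ : ℕ}

/-- Post-activations of the exact forward pass: `post Xt l = H^{(l+1)}`, i.e.
`post Xt 0 = H^{(1)} = Xt` and `post Xt l = ReLU(Ĥ^{(l+1)})` for `l ≥ 1`. -/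
noncomputable def post (net : SlicedGNN ℓ)
    (Xt : Matrix (Fin (net.nd 1)) (Fin (net.fd 1)) ℝ) :
    (l : ℕ) → Matrix (Fin (net.nd (l + 1))) (Fin (net.fd (l + 1))) ℝ
  | 0 => Xt
  | l + 1 => Matrix.of fun i j =>
      max ((net.A (l + 1) * net.post Xt l * net.W (l + 1)) i j + net.b (l + 1) j) 0

/-- Pre-activations of the exact forward pass: `pre Xt l = Ĥ^{(l+1)}` for `l ≥ 1`
(and `pre Xt 0 = Xt` by convention).  The exact output of the network is
`f(Xt) = Ĥ^{(L)} = pre Xt (ℓ + 1)`. -/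
noncomputable def pre (net : SlicedGNN ℓ)
    (Xt : Matrix (Fin (net.nd 1)) (Fin (net.fd 1)) ℝ) :
    (l : ℕ) → Matrix (Fin (net.nd (l + 1))) (Fin (net.fd (l + 1))) ℝ
  | 0 => Xt
  | l + 1 => Matrix.of fun i j =>
      (net.A (l + 1) * net.post Xt l * net.W (l + 1)) i j + net.b (l + 1) j

/-- Membership in the relaxed constraint set `Z(Xt)`:
`Hv l` plays the role of `H^{(l+1)}`, the pre-activations `Ĥ^{(l+1)}` being the
deterministic expressions `A^{(l)} H^{(l)} W^{(l)} + b^{(l)}`; for each layer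
`k + 2 ∈ {2, …, ℓ + 1}` the ReLU is replaced by its convex envelope constraints
according to the sign pattern of the bounds `R`, `S`. -/
def InZ (net : SlicedGNN ℓ)
    (R S : (l : ℕ) → Matrix (Fin (net.nd l)) (Fin (net.fd l)) ℝ)
    (Xt : Matrix (Fin (net.nd 1)) (Fin (net.fd 1)) ℝ)
    (Hv : (l : ℕ) → Matrix (Fin (net.nd (l + 1))) (Fin (net.fd (l + 1))) ℝ) : Prop :=
  Hv 0 = Xt ∧
  ∀ k < ℓ, ∀ i j,
    (S (k + 2) i j ≤ 0 → Hv (k + 1) i j = 0) ∧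
    (0 ≤ R (k + 2) i j → 0 < S (k + 2) i j →
      Hv (k + 1) i j = (net.A (k + 1) * Hv k * net.W (k + 1)) i j + net.b (k + 1) j) ∧
    (R (k + 2) i j < 0 → 0 < S (k + 2) i j →
      0 ≤ Hv (k + 1) i j ∧
      (net.A (k + 1) * Hv k * net.W (k + 1)) i j + net.b (k + 1) j ≤ Hv (k + 1) i j ∧
      Hv (k + 1) i j * (S (k + 2) i j - R (k + 2) i j) ≤
        S (k + 2) i j *
          ((net.A (k + 1) * Hv k * net.W (k + 1)) i j + net.b (k + 1) j - R (k + 2) i j))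

/-- The final-layer pre-activation `Ĥ^{(L)}` of a point of the relaxed constraint set. -/
noncomputable def outZ (net : SlicedGNN ℓ)
    (Hv : (l : ℕ) → Matrix (Fin (net.nd (l + 1))) (Fin (net.fd (l + 1))) ℝ) :
    Matrix (Fin (net.nd (ℓ + 2))) (Fin (net.fd (ℓ + 2))) ℝ :=
  Matrix.of fun i j => (net.A (ℓ + 1) * Hv ℓ * net.W (ℓ + 1)) i j + net.b (ℓ + 1) j

end SlicedGNN

/-- The objective `c · M` for a (single-row) output matrix `M`. -/
def cdot {m k : ℕ} (c : Fin k → ℝ) (M : Matrix (Fin m) (Fin k) ℝ) : ℝ :=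
  ∑ i, ∑ j, c j * M i j

namespace SlicedGNN

variable {ℓ : ℕ}

/-- Dual feasibility for the dual of the relaxed problem (Theorem 4.3):
`Ω^{(l)}` has entries in `[0,1]` for the layers `l = 2, …, ℓ + 1`, `η ≥ 0`, `ρ ≥ 0`,
and `Φ`, `Φ̂` are the backward-pass quantities determined by
`Φ^{(L)} = -c`, `Φ̂^{(l)} = Ȧ^{(l)ᵀ} Φ^{(l+1)} W^{(l)ᵀ}` for `l = 1, …, ℓ + 1`, and the
sign-pattern case distinction defining `Φ^{(l)}` from `Φ̂^{(l)}` for `l = 2, …, ℓ + 1`. -/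
def DualFeasible (net : SlicedGNN ℓ)
    (R S : (l : ℕ) → Matrix (Fin (net.nd l)) (Fin (net.fd l)) ℝ)
    (c : Fin (net.fd (ℓ + 2)) → ℝ)
    (Ω : (l : ℕ) → Matrix (Fin (net.nd l)) (Fin (net.fd l)) ℝ)
    (η : Fin (net.nd 1) → ℝ) (ρ : ℝ)
    (Φ Φhat : (l : ℕ) → Matrix (Fin (net.nd l)) (Fin (net.fd l)) ℝ) : Prop :=
  (∀ k < ℓ, ∀ i j, 0 ≤ Ω (k + 2) i j ∧ Ω (k + 2) i j ≤ 1) ∧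
  (∀ n, 0 ≤ η n) ∧ 0 ≤ ρ ∧
  (∀ i j, Φ (ℓ + 2) i j = -c j) ∧
  (∀ l, 1 ≤ l → l ≤ ℓ + 1 → Φhat l = (net.A l).transpose * Φ (l + 1) * (net.W l).transpose) ∧
  (∀ k < ℓ, ∀ i j,
    (S (k + 2) i j ≤ 0 → Φ (k + 2) i j = 0) ∧
    (0 ≤ R (k + 2) i j → 0 < S (k + 2) i j → Φ (k + 2) i j = Φhat (k + 2) i j) ∧
    (R (k + 2) i j < 0 → 0 < S (k + 2) i j →
      Φ (k + 2) i j =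
        S (k + 2) i j / (S (k + 2) i j - R (k + 2) i j) * max (Φhat (k + 2) i j) 0 -
          Ω (k + 2) i j * max (-Φhat (k + 2) i j) 0))

/-- The dual objective `g(X, c, Ω, η, ρ)` of Theorem 4.3 (the dual variables `Ω` enter
only through the backward-pass quantities `Φ`, `Φ̂`).  Here
`Δ_{nd} = [Φ̂^{(1)}_{nd}]₊ (1 - X_{nd}) + [Φ̂^{(1)}_{nd}]₋ X_{nd}` and
`Ψ_{nd} = max (Δ_{nd} - (η_n + ρ)) 0`. -/
noncomputable def dualObj (net : SlicedGNN ℓ)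
    (R S : (l : ℕ) → Matrix (Fin (net.nd l)) (Fin (net.fd l)) ℝ)
    (X : Matrix (Fin (net.nd 1)) (Fin (net.fd 1)) ℝ) (q Q : ℕ)
    (η : Fin (net.nd 1) → ℝ) (ρ : ℝ)
    (Φ Φhat : (l : ℕ) → Matrix (Fin (net.nd l)) (Fin (net.fd l)) ℝ) : ℝ :=
  (∑ k ∈ Finset.range ℓ, ∑ i, ∑ j,
      if R (k + 2) i j < 0 ∧ 0 < S (k + 2) i j then
        S (k + 2) i j * R (k + 2) i j / (S (k + 2) i j - R (k + 2) i j) *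
          max (Φhat (k + 2) i j) 0
      else 0) -
    (∑ l ∈ Finset.range (ℓ + 1), ∑ i, ∑ j, Φ (l + 2) i j * net.b (l + 1) j) -
    (∑ n, ∑ d, X n d * Φhat 1 n d) -
    (∑ n, ∑ d,
      max ((max (Φhat 1 n d) 0 * (1 - X n d) + max (-Φhat 1 n d) 0 * X n d) - (η n + ρ)) 0) -
    (q : ℝ) * (∑ n, η n) - (Q : ℝ) * ρ

end SlicedGNN


def ip {m n : ℕ} (M N : Matrix (Fin m) (Fin n) ℝ) : ℝ := ∑ i, ∑ j, M i j * N i j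

lemma ip_eq_trace {m n : ℕ} (M N : Matrix (Fin m) (Fin n) ℝ) :
    ip M N = Matrix.trace (N * M.transpose) := by
  simp [ip, Matrix.trace, Matrix.mul_apply, Matrix.diag, mul_comm]

lemma ip_adjoint {a b c d : ℕ} (A : Matrix (Fin a) (Fin b) ℝ) (H : Matrix (Fin b) (Fin c) ℝ)
    (W : Matrix (Fin c) (Fin d) ℝ) (Φ : Matrix (Fin a) (Fin d) ℝ) :
    ip Φ (A * H * W) = ip (A.transpose * Φ * W.transpose) H := by
  rw [ip_eq_trace, ip_eq_trace]
  have h : (A.transpose * Φ * W.transpose).transpose = W * (Φ.transpose * A) := by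
    simp [Matrix.transpose_mul, Matrix.mul_assoc]
  rw [h, Matrix.mul_assoc (A * H), Matrix.trace_mul_comm (A * H),
    Matrix.trace_mul_comm H, Matrix.mul_assoc W, Matrix.mul_assoc W, Matrix.mul_assoc]

lemma neuron_ineq (r s h hh t ω : ℝ)
    (hω0 : 0 ≤ ω) (hω1 : ω ≤ 1)
    (c1 : s ≤ 0 → h = 0) (c2 : 0 ≤ r → 0 < s → h = hh)
    (c3 : r < 0 → 0 < s → 0 ≤ h ∧ hh ≤ h ∧ h * (s - r) ≤ s * (hh - r))
    (φ : ℝ)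
    (d1 : s ≤ 0 → φ = 0) (d2 : 0 ≤ r → 0 < s → φ = t)
    (d3 : r < 0 → 0 < s → φ = s / (s - r) * max t 0 - ω * max (-t) 0) :
    t * h ≤ φ * hh - (if r < 0 ∧ 0 < s then s * r / (s - r) * max t 0 else 0) := by
  rcases le_or_gt s 0 with hs | hs
  · rw [c1 hs, d1 hs, if_neg (by rintro ⟨_, h2⟩; linarith)]; simp
  rcases le_or_gt 0 r with hr | hr
  · rw [c2 hr hs, d2 hr hs, if_neg (by rintro ⟨h1, _⟩; linarith)]; simp
  obtain ⟨h0, hle, henv⟩ := c3 hr hs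
  rw [d3 hr hs, if_pos ⟨hr, hs⟩]
  have hsr : (0:ℝ) < s - r := by linarith
  set p := max t 0 with hp
  set m := max (-t) 0 with hm
  have hp0 : 0 ≤ p := le_max_right _ _
  have hm0 : 0 ≤ m := le_max_right _ _
  have ht : p - m = t := by
    rcases le_total t 0 with h1 | h1
    · rw [hp, hm, max_eq_right h1, max_eq_left (by linarith : (0:ℝ) ≤ -t)]; ring
    · rw [hp, hm, max_eq_left h1, max_eq_right (by linarith : -t ≤ (0:ℝ))]; ring
  have fact1 : p * (h * (s - r)) ≤ p * (s * (hh - r)) :=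
    mul_le_mul_of_nonneg_left henv hp0
  have fact2 : ω * hh ≤ h := by
    rcases le_or_gt 0 hh with h1 | h1
    · nlinarith
    · nlinarith
  have fact4 : m * (ω * hh) ≤ m * h := mul_le_mul_of_nonneg_left fact2 hm0
  rw [← ht, ← mul_le_mul_iff_of_pos_right hsr]
  have hne : s - r ≠ 0 := ne_of_gt hsr
  field_simp
  nlinarith [fact1, mul_le_mul_of_nonneg_right fact4 hsr.le]


lemma input_ineq (x xt φ e : ℝ) (hx : x = 0 ∨ x = 1) (h0 : 0 ≤ xt) (h1 : xt ≤ 1)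
    (he : 0 ≤ e) :
    φ * (xt - x) ≤ max ((max φ 0 * (1 - x) + max (-φ) 0 * x) - e) 0 + e * |xt - x| := by
  have hd : φ * (xt - x) ≤ (max φ 0 * (1 - x) + max (-φ) 0 * x) * |xt - x| := by
    rcases hx with hx | hx
    · subst hx
      rw [sub_zero, abs_of_nonneg h0]
      nlinarith [le_max_left φ 0, le_max_right φ 0, le_max_right (-φ) 0]
    · subst hx
      rw [abs_of_nonpos (by linarith)]
      nlinarith [le_max_left (-φ) 0, le_max_right (-φ) 0, le_max_right φ 0]
  have habs0 : 0 ≤ |xt - x| := abs_nonneg _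
  have habs1 : |xt - x| ≤ 1 := by
    rcases hx with hx | hx <;> subst hx <;> rw [abs_le] <;> constructor <;> linarith
  have h2 : ((max φ 0 * (1 - x) + max (-φ) 0 * x) - e) * |xt - x| ≤
      max ((max φ 0 * (1 - x) + max (-φ) 0 * x) - e) 0 := by
    calc ((max φ 0 * (1 - x) + max (-φ) 0 * x) - e) * |xt - x|
        ≤ max ((max φ 0 * (1 - x) + max (-φ) 0 * x) - e) 0 * |xt - x| := by
          nlinarith [le_max_left ((max φ 0 * (1 - x) + max (-φ) 0 * x) - e) 0]
      _ ≤ _ := by nlinarith [le_max_right ((max φ 0 * (1 - x) + max (-φ) 0 * x) - e) 0]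
  nlinarith

namespace SlicedGNN

noncomputable def Hh {ℓ : ℕ} (net : SlicedGNN ℓ)
    (Hv : (l : ℕ) → Matrix (Fin (net.nd (l + 1))) (Fin (net.fd (l + 1))) ℝ) (k : ℕ) :
    Matrix (Fin (net.nd (k + 2))) (Fin (net.fd (k + 2))) ℝ :=
  Matrix.of fun i j => (net.A (k + 1) * Hv k * net.W (k + 1)) i j + net.b (k + 1) j

noncomputable def betak {ℓ : ℕ} (net : SlicedGNN ℓ)
    (Φ : (l : ℕ) → Matrix (Fin (net.nd l)) (Fin (net.fd l)) ℝ) (k : ℕ) : ℝ :=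
  ∑ i, ∑ j, Φ (k + 2) i j * net.b (k + 1) j

noncomputable def gammak {ℓ : ℕ} (net : SlicedGNN ℓ)
    (R S Φhat : (l : ℕ) → Matrix (Fin (net.nd l)) (Fin (net.fd l)) ℝ) (k : ℕ) : ℝ :=
  ∑ i, ∑ j,
    if R (k + 2) i j < 0 ∧ 0 < S (k + 2) i j then
      S (k + 2) i j * R (k + 2) i j / (S (k + 2) i j - R (k + 2) i j) *
        max (Φhat (k + 2) i j) 0
    else 0

lemma ip_Hh {ℓ : ℕ} (net : SlicedGNN ℓ)
    (Hv : (l : ℕ) → Matrix (Fin (net.nd (l + 1))) (Fin (net.fd (l + 1))) ℝ)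
    (Φ : (l : ℕ) → Matrix (Fin (net.nd l)) (Fin (net.fd l)) ℝ) (k : ℕ) :
    ip (Φ (k + 2)) (net.Hh Hv k) =
      ip (Φ (k + 2)) (net.A (k + 1) * Hv k * net.W (k + 1)) + net.betak Φ k := by
  simp only [ip, Hh, betak, Matrix.of_apply, mul_add, Finset.sum_add_distrib]

end SlicedGNN

/-- **Weak duality for the relaxed problem.**  For every dual-feasible choice of
variables (`Ω^{(l)}` with entries in `[0,1]`, `η ≥ 0`, `ρ ≥ 0`, together with the
backward-pass quantities `Φ`, `Φ̂`) and every primal-feasible point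
(`X̃ ∈ X̂_{q,Q}(X)` and `(H,Ĥ) ∈ Z(X̃)`), the dual objective is at most the primal
objective: `g(X, c, Ω, η, ρ) ≤ c · Ĥ^{(L)}`. -/
theorem weak_duality {ℓ : ℕ} (net : SlicedGNN ℓ) (q Q : ℕ)
    (X : Matrix (Fin (net.nd 1)) (Fin (net.fd 1)) ℝ)
    (hX : ∀ n d, X n d = 0 ∨ X n d = 1)
    (R S : (l : ℕ) → Matrix (Fin (net.nd l)) (Fin (net.fd l)) ℝ)
    (hRS : ∀ k < ℓ, ∀ i j, R (k + 2) i j ≤ S (k + 2) i j)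
    (c : Fin (net.fd (ℓ + 2)) → ℝ)
    (Ω Φ Φhat : (l : ℕ) → Matrix (Fin (net.nd l)) (Fin (net.fd l)) ℝ)
    (η : Fin (net.nd 1) → ℝ) (ρ : ℝ)
    (hdual : net.DualFeasible R S c Ω η ρ Φ Φhat)
    (Xt : Matrix (Fin (net.nd 1)) (Fin (net.fd 1)) ℝ)
    (hXt : Xt ∈ XsetRel X q Q)
    (Hv : (l : ℕ) → Matrix (Fin (net.nd (l + 1))) (Fin (net.fd (l + 1))) ℝ)
    (hHv : net.InZ R S Xt Hv) :
    net.dualObj R S X q Q η ρ Φ Φhat ≤ cdot c (net.outZ Hv) := by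
  classical
  obtain ⟨hΩ, hη, hρ, hΦL, hΦh, hmid⟩ := hdual
  obtain ⟨hH0, hcon⟩ := hHv
  obtain ⟨hbox, hQc, hqc⟩ := hXt
  -- link identity
  have hlink : ∀ k, k ≤ ℓ →
      ip (Φ (k + 2)) (net.Hh Hv k) = ip (Φhat (k + 1)) (Hv k) + net.betak Φ k := by
    intro k hk
    rw [net.ip_Hh Hv Φ k, ip_adjoint, ← hΦh (k + 1) (by omega) (by omega)]
  -- middle layer inequality
  have hkey : ∀ k, k < ℓ →
      ip (Φhat (k + 2)) (Hv (k + 1)) ≤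
        ip (Φ (k + 2)) (net.Hh Hv k) - net.gammak R S Φhat k := by
    intro k hk
    have heq : ip (Φ (k + 2)) (net.Hh Hv k) - net.gammak R S Φhat k =
        ∑ i, ∑ j, (Φ (k + 2) i j * net.Hh Hv k i j -
          (if R (k + 2) i j < 0 ∧ 0 < S (k + 2) i j then
            S (k + 2) i j * R (k + 2) i j / (S (k + 2) i j - R (k + 2) i j) *
              max (Φhat (k + 2) i j) 0
          else 0)) := by
      simp only [ip, SlicedGNN.gammak, Finset.sum_sub_distrib]
    rw [heq, ip]
    refine Finset.sum_le_sum fun i _ => Finset.sum_le_sum fun j _ => ?_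
    obtain ⟨c1, c2, c3⟩ := hcon k hk i j
    obtain ⟨d1, d2, d3⟩ := hmid k hk i j
    have hof : net.Hh Hv k i j =
        (net.A (k + 1) * Hv k * net.W (k + 1)) i j + net.b (k + 1) j := rfl
    exact neuron_ineq (R (k + 2) i j) (S (k + 2) i j) (Hv (k + 1) i j)
      (net.Hh Hv k i j) (Φhat (k + 2) i j) (Ω (k + 2) i j)
      (hΩ k hk i j).1 (hΩ k hk i j).2
      (fun hs => c1 hs) (fun hr hs => by rw [hof]; exact c2 hr hs)
      (fun hr hs => by rw [hof]; exact c3 hr hs)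
      (Φ (k + 2) i j) d1 d2 d3
  -- chain by induction
  have hind : ∀ k, k ≤ ℓ →
      ip (Φ (k + 2)) (net.Hh Hv k) ≤ ip (Φ 2) (net.Hh Hv 0) +
        ∑ m ∈ Finset.range k, (net.betak Φ (m + 1) - net.gammak R S Φhat m) := by
    intro k
    induction k with
    | zero => intro _; simp
    | succ k IH =>
      intro hk
      have hk' : k < ℓ := hk
      have e1 : ip (Φ (k + 1 + 2)) (net.Hh Hv (k + 1)) =
          ip (Φhat (k + 2)) (Hv (k + 1)) + net.betak Φ (k + 1) := hlink (k + 1) hk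
      rw [e1, Finset.sum_range_succ]
      have h2 := IH (le_of_lt hk')
      have h3 := hkey k hk'
      linarith
  -- output identity
  have hout : ip (Φ (ℓ + 2)) (net.Hh Hv ℓ) = -cdot c (net.outZ Hv) := by
    have hpt : ∀ i j, Φ (ℓ + 2) i j * net.Hh Hv ℓ i j =
        -(c j * net.outZ Hv i j) := by
      intro i j
      rw [hΦL i j]
      have h4 : net.Hh Hv ℓ i j = net.outZ Hv i j := rfl
      rw [h4]; ring
    simp only [ip, cdot, hpt, Finset.sum_neg_distrib]
  -- input layer bound
  have hin : ip (Φhat 1) Xt ≤ ip (Φhat 1) X +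
      (∑ n, ∑ d, max ((max (Φhat 1 n d) 0 * (1 - X n d) +
        max (-Φhat 1 n d) 0 * X n d) - (η n + ρ)) 0) +
      (q : ℝ) * (∑ n, η n) + (Q : ℝ) * ρ := by
    have step : ∀ n d, Φhat 1 n d * (Xt n d - X n d) ≤
        max ((max (Φhat 1 n d) 0 * (1 - X n d) +
          max (-Φhat 1 n d) 0 * X n d) - (η n + ρ)) 0 +
        (η n + ρ) * |Xt n d - X n d| := fun n d =>
      input_ineq (X n d) (Xt n d) (Φhat 1 n d) (η n + ρ) (hX n d)
        (hbox n d).1 (hbox n d).2 (by have := hη n; linarith)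
    have hsum : ∑ n, ∑ d, Φhat 1 n d * (Xt n d - X n d) ≤
        (∑ n, ∑ d, max ((max (Φhat 1 n d) 0 * (1 - X n d) +
          max (-Φhat 1 n d) 0 * X n d) - (η n + ρ)) 0) +
        ∑ n, ∑ d, (η n + ρ) * |Xt n d - X n d| := by
      rw [← Finset.sum_add_distrib]
      refine Finset.sum_le_sum fun n _ => ?_
      rw [← Finset.sum_add_distrib]
      exact Finset.sum_le_sum fun d _ => step n d
    have habs : ∑ n, ∑ d, (η n + ρ) * |Xt n d - X n d| ≤
        (q : ℝ) * (∑ n, η n) + (Q : ℝ) * ρ := by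
      have e2 : ∀ n : Fin (net.nd 1), ∑ d, (η n + ρ) * |Xt n d - X n d| =
          η n * (∑ d, |Xt n d - X n d|) + ρ * (∑ d, |Xt n d - X n d|) := by
        intro n
        rw [Finset.mul_sum, Finset.mul_sum, ← Finset.sum_add_distrib]
        exact Finset.sum_congr rfl fun d _ => by ring
      calc ∑ n, ∑ d, (η n + ρ) * |Xt n d - X n d|
          = (∑ n, η n * (∑ d, |Xt n d - X n d|)) +
            ρ * (∑ n, ∑ d, |Xt n d - X n d|) := by
            rw [Finset.mul_sum, ← Finset.sum_add_distrib]
            exact Finset.sum_congr rfl fun n _ => e2 n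
        _ ≤ (∑ n, η n * (q : ℝ)) + ρ * (Q : ℝ) :=
            add_le_add
              (Finset.sum_le_sum fun n _ =>
                mul_le_mul_of_nonneg_left (hqc n) (hη n))
              (mul_le_mul_of_nonneg_left hQc hρ)
        _ = (q : ℝ) * (∑ n, η n) + (Q : ℝ) * ρ := by
            rw [← Finset.sum_mul]; ring
    have e3 : ip (Φhat 1) Xt - ip (Φhat 1) X =
        ∑ n, ∑ d, Φhat 1 n d * (Xt n d - X n d) := by
      simp only [ip, mul_sub, Finset.sum_sub_distrib]
    linarith
  -- put everything together
  have hchain := hind ℓ le_rfl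
  rw [hout, hlink 0 (Nat.zero_le _), hH0] at hchain
  have hsum0 : net.betak Φ 0 + ∑ m ∈ Finset.range ℓ,
      (net.betak Φ (m + 1) - net.gammak R S Φhat m) =
      (∑ m ∈ Finset.range (ℓ + 1), net.betak Φ m) -
      ∑ m ∈ Finset.range ℓ, net.gammak R S Φhat m := by
    rw [Finset.sum_range_succ', Finset.sum_sub_distrib]; ring
  have hdo : net.dualObj R S X q Q η ρ Φ Φhat =
      (∑ m ∈ Finset.range ℓ, net.gammak R S Φhat m) -
      (∑ m ∈ Finset.range (ℓ + 1), net.betak Φ m) -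
      ip (Φhat 1) X -
      (∑ n, ∑ d, max ((max (Φhat 1 n d) 0 * (1 - X n d) +
        max (-Φhat 1 n d) 0 * X n d) - (η n + ρ)) 0) -
      (q : ℝ) * (∑ n, η n) - (Q : ℝ) * ρ := by
    simp only [SlicedGNN.dualObj, SlicedGNN.gammak, SlicedGNN.betak, ip]
    congr 4
    exact Finset.sum_congr rfl fun n _ => Finset.sum_congr rfl fun d _ => mul_comm _ _
  rw [hdo]
  linarith
end

section
/- Theorem 4.4 (closed-form optimal dual variables η, ρ): Let Δ, q, Q, S_n, o_n, S_Q, ρ* be as in the context, and define η*_n := max{0, o_n − ρ*} for each row n. Then (ρ*, η*) minimizes h over all ρ ≥ 0 and η ∈ ℝ^N with η ≥ 0; that is, h(ρ*, η*) ≤ h(ρ, η) for all such (ρ, η). (Since the dual objective of the relaxed GNN problem depends on (η, ρ) only through the additive term −h(ρ, η), these values maximize the dual objective for any fixed Ω.) -/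
open scoped BigOperators

/-- The inner dual objective
`h(ρ, η) = Σ_{n,d} max{Δ_{nd} − η_n − ρ, 0} + q·Σ_n η_n + Q·ρ`. -/
noncomputable def hFun {N D : ℕ} (Δ : Matrix (Fin N) (Fin D) ℝ) (q Q : ℕ)
    (ρ : ℝ) (η : Fin N → ℝ) : ℝ :=
  (∑ n, ∑ d, max (Δ n d - η n - ρ) 0) + (q : ℝ) * (∑ n, η n) + (Q : ℝ) * ρ

/-- **Theorem 4.4 (closed-form optimal dual variables `η`, `ρ`).**  Let `Δ` be a
nonnegative `N × D` matrix, `0 < q ≤ D` and `0 < Q ≤ N·q`.  For each row `n` let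
`Sn n` consist of `q` columns carrying the `q` largest values of row `n` of `Δ`, with
`o n` the smallest of these values; let `SQ` consist of `Q` pairs `(n,d)` with
`d ∈ Sn n` carrying the `Q` largest values among `{Δ_{nd} : d ∈ Sn n}`, and let `ρ*`
be the smallest of these (the `Q`-th largest value).  With `η*_n = max 0 (o n − ρ*)`,
the pair `(ρ*, η*)` minimizes `h` over all `ρ ≥ 0` and `η ≥ 0`. -/
theorem closed_form_optimal_dual_variables {N D : ℕ} (q Q : ℕ)
    (hq : 0 < q) (hqD : q ≤ D) (hQ : 0 < Q) (hQN : Q ≤ N * q)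
    (Δ : Matrix (Fin N) (Fin D) ℝ) (hΔ : ∀ n d, 0 ≤ Δ n d)
    (Sn : Fin N → Finset (Fin D)) (hSncard : ∀ n, (Sn n).card = q)
    (hSntop : ∀ n, ∀ d ∈ Sn n, ∀ d' ∉ Sn n, Δ n d' ≤ Δ n d)
    (o : Fin N → ℝ)
    (ho1 : ∀ n, ∃ d ∈ Sn n, o n = Δ n d)
    (ho2 : ∀ n, ∀ d ∈ Sn n, o n ≤ Δ n d)
    (SQ : Finset (Fin N × Fin D)) (hSQcard : SQ.card = Q)
    (hSQsub : ∀ p ∈ SQ, p.2 ∈ Sn p.1)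
    (hSQtop : ∀ p ∈ SQ, ∀ p' : Fin N × Fin D, p'.2 ∈ Sn p'.1 → p' ∉ SQ →
      Δ p'.1 p'.2 ≤ Δ p.1 p.2)
    (ρstar : ℝ)
    (hρ1 : ∃ p ∈ SQ, ρstar = Δ p.1 p.2)
    (hρ2 : ∀ p ∈ SQ, ρstar ≤ Δ p.1 p.2)
    (ηstar : Fin N → ℝ) (hηstar : ∀ n, ηstar n = max 0 (o n - ρstar)) :
    0 ≤ ρstar ∧ (∀ n, 0 ≤ ηstar n) ∧
    ∀ (ρ : ℝ) (η : Fin N → ℝ), 0 ≤ ρ → (∀ n, 0 ≤ η n) →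
      hFun Δ q Q ρstar ηstar ≤ hFun Δ q Q ρ η := by
  obtain ⟨pstar, hpstar, hpeq⟩ := hρ1
  have hρ0 : 0 ≤ ρstar := hpeq ▸ hΔ _ _
  have hη0 : ∀ n, 0 ≤ ηstar n := fun n => (hηstar n) ▸ le_max_left 0 _
  refine ⟨hρ0, hη0, ?_⟩
  intro ρ η hρ hη
  set S : Finset (Fin N × Fin D) :=
    (Finset.univ ×ˢ Finset.univ).filter (fun p => p.2 ∈ Sn p.1) with hSdef
  have hSmem : ∀ p : Fin N × Fin D, p ∈ S ↔ p.2 ∈ Sn p.1 := by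
    intro p; simp [hSdef]
  have hSQS : SQ ⊆ S := fun p hp => (hSmem p).2 (hSQsub p hp)
  have hkey : ∀ p : Fin N × Fin D, p.2 ∈ Sn p.1 → p ∉ SQ → Δ p.1 p.2 ≤ ρstar := by
    intro p hp hnp
    rw [hpeq]; exact hSQtop pstar hpstar p hp hnp
  set V : ℝ := ∑ p ∈ SQ, Δ p.1 p.2 with hV
  have hSsum : ∀ f : Fin N → ℝ, ∑ p ∈ S, f p.1 = (q : ℝ) * ∑ n, f n := by
    intro f
    rw [hSdef, Finset.sum_filter, Finset.sum_product, Finset.mul_sum]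
    refine Finset.sum_congr rfl (fun n _ => ?_)
    have : (∑ y : Fin D, if (n, y).2 ∈ Sn (n, y).1 then f (n, y).1 else 0)
        = ∑ y : Fin D, if y ∈ Sn n then f n else 0 := rfl
    rw [this, Finset.sum_ite_mem, Finset.univ_inter, Finset.sum_const, hSncard n,
      nsmul_eq_mul]
  have hsubuniv : ∀ T : Finset (Fin N × Fin D), T ⊆ Finset.univ ×ˢ Finset.univ :=
    fun T p _ => by simp
  -- lower bound: V ≤ hFun Δ q Q ρ η
  have lower : V ≤ hFun Δ q Q ρ η := by
    have h1 : ∑ p ∈ SQ, (Δ p.1 p.2 - η p.1 - ρ)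
        ≤ ∑ n, ∑ d, max (Δ n d - η n - ρ) 0 := by
      calc ∑ p ∈ SQ, (Δ p.1 p.2 - η p.1 - ρ)
          ≤ ∑ p ∈ SQ, max (Δ p.1 p.2 - η p.1 - ρ) 0 :=
            Finset.sum_le_sum (fun p _ => le_max_left _ _)
        _ ≤ ∑ p ∈ Finset.univ ×ˢ Finset.univ, max (Δ p.1 p.2 - η p.1 - ρ) 0 :=
            Finset.sum_le_sum_of_subset_of_nonneg (hsubuniv SQ)
              (fun p _ _ => le_max_right _ _)
        _ = ∑ n, ∑ d, max (Δ n d - η n - ρ) 0 :=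
            Finset.sum_product' Finset.univ Finset.univ
              (fun n d => max (Δ n d - η n - ρ) 0)
    have h2 : ∑ p ∈ SQ, η p.1 ≤ (q : ℝ) * ∑ n, η n := by
      rw [← hSsum η]
      exact Finset.sum_le_sum_of_subset_of_nonneg hSQS (fun p _ _ => hη p.1)
    have h3 : ∑ p ∈ SQ, (Δ p.1 p.2 - η p.1 - ρ)
        = V - (∑ p ∈ SQ, η p.1) - (Q : ℝ) * ρ := by
      rw [Finset.sum_sub_distrib, Finset.sum_sub_distrib, Finset.sum_const,
        hSQcard, nsmul_eq_mul]
    unfold hFun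
    linarith
  -- upper bound: hFun Δ q Q ρstar ηstar = V
  have hout : ∀ n, ∀ d : Fin D, d ∉ Sn n →
      max (Δ n d - ηstar n - ρstar) 0 = 0 := by
    intro n d hd
    obtain ⟨d0, hd0, ho⟩ := ho1 n
    have h1 : Δ n d ≤ o n := by rw [ho]; exact hSntop n d0 hd0 d hd
    have h2 : o n ≤ ηstar n + ρstar := by
      rw [hηstar n]
      rcases le_total (o n - ρstar) 0 with h | h
      · rw [max_eq_left h]; linarith
      · rw [max_eq_right h]; linarith
    exact max_eq_right (by linarith)
  have hzeroη : ∀ p ∈ S, p ∉ SQ → ηstar p.1 = 0 := by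
    intro p hp hnp
    have h1 := hkey p ((hSmem p).1 hp) hnp
    have h2 := ho2 p.1 p.2 ((hSmem p).1 hp)
    rw [hηstar]; exact max_eq_left (by linarith)
  have hmidzero : ∀ p ∈ S, p ∉ SQ →
      max (Δ p.1 p.2 - ηstar p.1 - ρstar) 0 = 0 := by
    intro p hp hnp
    have h1 := hkey p ((hSmem p).1 hp) hnp
    have h2 := hη0 p.1
    exact max_eq_right (by linarith)
  have hin : ∀ p ∈ SQ,
      max (Δ p.1 p.2 - ηstar p.1 - ρstar) 0 = Δ p.1 p.2 - ηstar p.1 - ρstar := by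
    intro p hp
    apply max_eq_left
    have h1 := hρ2 p hp
    have h2 := ho2 p.1 p.2 (hSQsub p hp)
    rw [hηstar]
    rcases le_total (o p.1 - ρstar) 0 with h | h
    · rw [max_eq_left h]; linarith
    · rw [max_eq_right h]; linarith
  have hsum1 : (∑ n, ∑ d, max (Δ n d - ηstar n - ρstar) 0)
      = ∑ p ∈ SQ, (Δ p.1 p.2 - ηstar p.1 - ρstar) := by
    rw [← Finset.sum_product' Finset.univ Finset.univ
      (fun n d => max (Δ n d - ηstar n - ρstar) 0)]
    rw [← Finset.sum_subset (hsubuniv S)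
      (fun p _ hp => hout p.1 p.2 (fun h => hp ((hSmem p).2 h)))]
    rw [← Finset.sum_subset hSQS (fun p hp hnp => hmidzero p hp hnp)]
    exact Finset.sum_congr rfl hin
  have hsum2 : ∑ p ∈ SQ, ηstar p.1 = (q : ℝ) * ∑ n, ηstar n := by
    rw [← hSsum ηstar]
    exact Finset.sum_subset hSQS hzeroη
  have h3' : ∑ p ∈ SQ, (Δ p.1 p.2 - ηstar p.1 - ρstar)
      = V - (∑ p ∈ SQ, ηstar p.1) - (Q : ℝ) * ρstar := by
    rw [Finset.sum_sub_distrib, Finset.sum_sub_distrib, Finset.sum_const,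
      hSQcard, nsmul_eq_mul]
  have upper : hFun Δ q Q ρstar ηstar = V := by
    unfold hFun
    rw [hsum1, h3', hsum2]
    ring
  rw [upper]
  exact lower
end

section
/- Optimal value of the inner dual minimization: Let Δ, q, Q, S_n, o_n, S_Q, ρ* be as in the context, and define η*_n := max{0, o_n − ρ*}. Then the minimum of h over all ρ ≥ 0 and η ∈ ℝ^N with η ≥ 0 equals Σ_{(n,d) ∈ S_Q} Δ_{nd}; in particular h(ρ*, η*) = Σ_{(n,d) ∈ S_Q} Δ_{nd}. -/
open scoped BigOperators

/-- **Optimal value of the inner dual minimization.**  With `Δ`, `q`, `Q`, `Sn`, `o`,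
`SQ`, `ρ*` as in Theorem 4.4 and `η*_n = max 0 (o n − ρ*)`, the minimum of `h` over
all `ρ ≥ 0`, `η ≥ 0` equals `Σ_{(n,d) ∈ SQ} Δ_{nd}`, and in particular
`h(ρ*, η*) = Σ_{(n,d) ∈ SQ} Δ_{nd}`. -/
theorem inner_dual_optimal_value {N D : ℕ} (q Q : ℕ)
    (hq : 0 < q) (hqD : q ≤ D) (hQ : 0 < Q) (hQN : Q ≤ N * q)
    (Δ : Matrix (Fin N) (Fin D) ℝ) (hΔ : ∀ n d, 0 ≤ Δ n d)
    (Sn : Fin N → Finset (Fin D)) (hSncard : ∀ n, (Sn n).card = q)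
    (hSntop : ∀ n, ∀ d ∈ Sn n, ∀ d' ∉ Sn n, Δ n d' ≤ Δ n d)
    (o : Fin N → ℝ)
    (ho1 : ∀ n, ∃ d ∈ Sn n, o n = Δ n d)
    (ho2 : ∀ n, ∀ d ∈ Sn n, o n ≤ Δ n d)
    (SQ : Finset (Fin N × Fin D)) (hSQcard : SQ.card = Q)
    (hSQsub : ∀ p ∈ SQ, p.2 ∈ Sn p.1)
    (hSQtop : ∀ p ∈ SQ, ∀ p' : Fin N × Fin D, p'.2 ∈ Sn p'.1 → p' ∉ SQ →
      Δ p'.1 p'.2 ≤ Δ p.1 p.2)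
    (ρstar : ℝ)
    (hρ1 : ∃ p ∈ SQ, ρstar = Δ p.1 p.2)
    (hρ2 : ∀ p ∈ SQ, ρstar ≤ Δ p.1 p.2)
    (ηstar : Fin N → ℝ) (hηstar : ∀ n, ηstar n = max 0 (o n - ρstar)) :
    IsLeast {v : ℝ | ∃ (ρ : ℝ) (η : Fin N → ℝ), 0 ≤ ρ ∧ (∀ n, 0 ≤ η n) ∧
        v = hFun Δ q Q ρ η}
      (∑ p ∈ SQ, Δ p.1 p.2) ∧
    hFun Δ q Q ρstar ηstar = ∑ p ∈ SQ, Δ p.1 p.2 := by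
  classical
  have hρnn : 0 ≤ ρstar := by
    obtain ⟨p, hp, he⟩ := hρ1
    rw [he]; exact hΔ _ _
  have hηnn : ∀ n, 0 ≤ ηstar n := fun n => (hηstar n) ▸ le_max_left _ _
  have hout : ∀ n d, d ∈ Sn n → (n, d) ∉ SQ → Δ n d ≤ ρstar := by
    intro n d hd hnd
    obtain ⟨p0, hp0, he⟩ := hρ1
    rw [he]
    exact hSQtop p0 hp0 (n, d) hd hnd
  have hout2 : ∀ n d, d ∉ Sn n → Δ n d ≤ o n := by
    intro n d hd
    obtain ⟨d0, hd0, he⟩ := ho1 n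
    rw [he]
    exact hSntop n d0 hd0 d hd
  have hinj : ∀ n : Fin N, Function.Injective (fun d : Fin D => (n, d)) := by
    intro n a b h; simpa using h
  have hfib_sub : ∀ n, SQ.filter (fun p => p.1 = n) ⊆ (Sn n).image (fun d => (n, d)) := by
    intro n p hp
    obtain ⟨hp1, hp2⟩ := Finset.mem_filter.mp hp
    exact Finset.mem_image.mpr ⟨p.2, hp2 ▸ hSQsub p hp1, by rw [← hp2]⟩
  have hfib_card : ∀ n, (SQ.filter (fun p => p.1 = n)).card ≤ q := by
    intro n
    refine le_trans (Finset.card_le_card (hfib_sub n)) ?_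
    rw [Finset.card_image_of_injective _ (hinj n), hSncard n]
  have hfibsum : ∀ f : Fin N → ℝ,
      ∑ p ∈ SQ, f p.1 = ∑ n, ((SQ.filter (fun p => p.1 = n)).card : ℝ) * f n := by
    intro f
    rw [← Finset.sum_fiberwise SQ Prod.fst (fun p => f p.1)]
    refine Finset.sum_congr rfl fun n _ => ?_
    calc ∑ p ∈ SQ.filter (fun p => p.1 = n), f p.1
        = ∑ p ∈ SQ.filter (fun p => p.1 = n), f n :=
          Finset.sum_congr rfl (fun p hp => by rw [(Finset.mem_filter.mp hp).2])
      _ = _ := by rw [Finset.sum_const, nsmul_eq_mul]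
  have hpair : ∀ g : Fin N → Fin D → ℝ,
      ∑ p : Fin N × Fin D, g p.1 p.2 = ∑ n, ∑ d, g n d := fun g => by
    rw [Fintype.sum_prod_type]
  -- key pointwise identity for the optimal point
  have key : ∀ p : Fin N × Fin D, max (Δ p.1 p.2 - ηstar p.1 - ρstar) 0
      = if p ∈ SQ then Δ p.1 p.2 - ηstar p.1 - ρstar else 0 := by
    intro p
    by_cases hp : p ∈ SQ
    · have h1 : ρstar ≤ Δ p.1 p.2 := hρ2 p hp
      have h2 : o p.1 ≤ Δ p.1 p.2 := ho2 p.1 p.2 (hSQsub p hp)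
      have h3 : ηstar p.1 = max 0 (o p.1 - ρstar) := hηstar p.1
      rw [if_pos hp, max_eq_left]
      rcases max_cases (0:ℝ) (o p.1 - ρstar) with ⟨he, _⟩ | ⟨he, _⟩ <;>
        rw [h3, he] <;> linarith
    · rw [if_neg hp, max_eq_right]
      have h3 : o p.1 - ρstar ≤ ηstar p.1 := (hηstar p.1) ▸ le_max_right _ _
      have h4 : 0 ≤ ηstar p.1 := hηnn p.1
      by_cases hd : p.2 ∈ Sn p.1
      · have := hout p.1 p.2 hd (by simpa using hp)
        linarith
      · have := hout2 p.1 p.2 hd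
        linarith
  -- full fibers where ηstar is positive
  have hfull : ∀ n, 0 < ηstar n → ((SQ.filter (fun p => p.1 = n)).card : ℝ) = q := by
    intro n hn
    have hall : ∀ d ∈ Sn n, (n, d) ∈ SQ := by
      intro d hd
      by_contra hnd
      have h1 := hout n d hd hnd
      have h2 := ho2 n d hd
      have : ηstar n = 0 := by
        rw [hηstar n, max_eq_left]; linarith
      linarith
    have : (Sn n).image (fun d => (n, d)) ⊆ SQ.filter (fun p => p.1 = n) := by
      intro p hp
      obtain ⟨d, hd, he⟩ := Finset.mem_image.mp hp
      rw [← he]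
      exact Finset.mem_filter.mpr ⟨hall d hd, rfl⟩
    have hcard : (SQ.filter (fun p => p.1 = n)).card = q := by
      refine le_antisymm (hfib_card n) ?_
      calc q = ((Sn n).image (fun d => (n, d))).card := by
              rw [Finset.card_image_of_injective _ (hinj n), hSncard n]
        _ ≤ _ := Finset.card_le_card this
    rw [hcard]
  have hηsum : ∑ p ∈ SQ, ηstar p.1 = (q : ℝ) * ∑ n, ηstar n := by
    rw [hfibsum ηstar, Finset.mul_sum]
    refine Finset.sum_congr rfl fun n _ => ?_
    rcases (hηnn n).eq_or_lt with h | h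
    · rw [← h, mul_zero, mul_zero]
    · rw [hfull n h]
  -- value at the optimal point
  have hval : hFun Δ q Q ρstar ηstar = ∑ p ∈ SQ, Δ p.1 p.2 := by
    have hmax : ∑ n, ∑ d, max (Δ n d - ηstar n - ρstar) 0
        = ∑ p ∈ SQ, (Δ p.1 p.2 - ηstar p.1 - ρstar) := by
      rw [← hpair (fun n d => max (Δ n d - ηstar n - ρstar) 0)]
      rw [Finset.sum_congr rfl (fun p _ => key p), Finset.sum_ite_mem,
        Finset.univ_inter]
    have hsplit : ∑ p ∈ SQ, (Δ p.1 p.2 - ηstar p.1 - ρstar)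
        = (∑ p ∈ SQ, Δ p.1 p.2) - (∑ p ∈ SQ, ηstar p.1) - (Q : ℝ) * ρstar := by
      rw [Finset.sum_sub_distrib, Finset.sum_sub_distrib, Finset.sum_const,
        hSQcard, nsmul_eq_mul]
    unfold hFun
    rw [hmax, hsplit, hηsum]
    ring
  refine ⟨⟨⟨ρstar, ηstar, hρnn, hηnn, hval.symm⟩, ?_⟩, hval⟩
  rintro v ⟨ρ, η, hρ, hη, rfl⟩
  have h1 : ∀ p ∈ SQ, Δ p.1 p.2 ≤ max (Δ p.1 p.2 - η p.1 - ρ) 0 + η p.1 + ρ := by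
    intro p _
    have := le_max_left (Δ p.1 p.2 - η p.1 - ρ) 0
    linarith
  have h2 : ∑ p ∈ SQ, Δ p.1 p.2
      ≤ (∑ p ∈ SQ, max (Δ p.1 p.2 - η p.1 - ρ) 0) + (∑ p ∈ SQ, η p.1)
        + (Q : ℝ) * ρ := by
    calc ∑ p ∈ SQ, Δ p.1 p.2
        ≤ ∑ p ∈ SQ, (max (Δ p.1 p.2 - η p.1 - ρ) 0 + η p.1 + ρ) :=
          Finset.sum_le_sum h1
      _ = _ := by
          rw [Finset.sum_add_distrib, Finset.sum_add_distrib, Finset.sum_const,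
            hSQcard, nsmul_eq_mul]
  have h3 : ∑ p ∈ SQ, max (Δ p.1 p.2 - η p.1 - ρ) 0
      ≤ ∑ n, ∑ d, max (Δ n d - η n - ρ) 0 := by
    rw [← hpair (fun n d => max (Δ n d - η n - ρ) 0)]
    exact Finset.sum_le_sum_of_subset_of_nonneg (Finset.subset_univ SQ)
      (fun p _ _ => le_max_right _ _)
  have h4 : ∑ p ∈ SQ, η p.1 ≤ (q : ℝ) * ∑ n, η n := by
    rw [hfibsum η]
    have step : ∀ n ∈ Finset.univ, ((SQ.filter (fun p => p.1 = n)).card : ℝ) * η n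
        ≤ (q : ℝ) * η n := fun n _ =>
      mul_le_mul_of_nonneg_right (by exact_mod_cast hfib_card n) (hη n)
    refine le_trans (Finset.sum_le_sum step) ?_
    rw [← Finset.mul_sum]
  unfold hFun
  linarith
end

section
/- Greedy optimality for the budgeted fractional selection LP: Let Δ, q, Q, S_n, S_Q be as in the context. Then the supremum of Σ_{n,d} Δ_{nd} α_{nd} over all matrices α ∈ [0,1]^{N×D} satisfying Σ_{n,d} α_{nd} ≤ Q and Σ_d α_{nd} ≤ q for every row n equals Σ_{(n,d) ∈ S_Q} Δ_{nd}, and it is attained by the indicator matrix of S_Q (α_{nd} = 1 if (n,d) ∈ S_Q and α_{nd} = 0 otherwise). -/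
open scoped BigOperators

/-- **Greedy optimality for the budgeted fractional selection LP.**  Let `Δ` be a
nonnegative `N × D` matrix, `0 < q ≤ D` and `0 < Q ≤ N·q`; let `Sn n` consist of `q`
columns carrying the `q` largest values of row `n` of `Δ`, and let `SQ` consist of
`Q` pairs `(n,d)` with `d ∈ Sn n` carrying the `Q` largest values among
`{Δ_{nd} : d ∈ Sn n}`.  Then the supremum of `Σ_{n,d} Δ_{nd} α_{nd}` over all
`α ∈ [0,1]^{N×D}` with `Σ_{n,d} α_{nd} ≤ Q` and `Σ_d α_{nd} ≤ q` for every row `n`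
equals `Σ_{(n,d) ∈ SQ} Δ_{nd}`, and it is attained by the indicator matrix of `SQ`. -/
theorem greedy_optimality_budgeted_LP {N D : ℕ} (q Q : ℕ)
    (hq : 0 < q) (hqD : q ≤ D) (hQ : 0 < Q) (hQN : Q ≤ N * q)
    (Δ : Matrix (Fin N) (Fin D) ℝ) (hΔ : ∀ n d, 0 ≤ Δ n d)
    (Sn : Fin N → Finset (Fin D)) (hSncard : ∀ n, (Sn n).card = q)
    (hSntop : ∀ n, ∀ d ∈ Sn n, ∀ d' ∉ Sn n, Δ n d' ≤ Δ n d)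
    (SQ : Finset (Fin N × Fin D)) (hSQcard : SQ.card = Q)
    (hSQsub : ∀ p ∈ SQ, p.2 ∈ Sn p.1)
    (hSQtop : ∀ p ∈ SQ, ∀ p' : Fin N × Fin D, p'.2 ∈ Sn p'.1 → p' ∉ SQ →
      Δ p'.1 p'.2 ≤ Δ p.1 p.2) :
    IsGreatest
      {v : ℝ | ∃ α : Matrix (Fin N) (Fin D) ℝ,
        (∀ n d, 0 ≤ α n d ∧ α n d ≤ 1) ∧
        (∑ n, ∑ d, α n d) ≤ (Q : ℝ) ∧
        (∀ n, (∑ d, α n d) ≤ (q : ℝ)) ∧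
        v = ∑ n, ∑ d, Δ n d * α n d}
      (∑ p ∈ SQ, Δ p.1 p.2) ∧
    (∑ n, ∑ d, Δ n d * (if (n, d) ∈ SQ then (1 : ℝ) else 0)) = ∑ p ∈ SQ, Δ p.1 p.2 := by
  have hSQne : SQ.Nonempty := Finset.card_pos.mp (by rw [hSQcard]; exact hQ)
  have hSnne : ∀ n, (Sn n).Nonempty := fun n =>
    Finset.card_pos.mp (by rw [hSncard]; exact hq)
  set lam : ℝ := SQ.inf' hSQne (fun p => Δ p.1 p.2) with hlamdef
  set s : Fin N → ℝ := fun n => (Sn n).inf' (hSnne n) (Δ n) with hsdef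
  set μ : Fin N → ℝ := fun n => max (s n - lam) 0 with hμdef
  have hlam0 : 0 ≤ lam := Finset.le_inf' _ _ (fun p _ => hΔ p.1 p.2)
  have hμ0 : ∀ n, 0 ≤ μ n := fun n => le_max_right _ _
  -- key inequalities
  have hA : ∀ p ∈ SQ, lam + μ p.1 ≤ Δ p.1 p.2 := by
    intro p hp
    have h1 : lam ≤ Δ p.1 p.2 := Finset.inf'_le _ hp
    have h2 : s p.1 ≤ Δ p.1 p.2 := Finset.inf'_le _ (hSQsub p hp)
    rcases le_total (s p.1 - lam) 0 with h | h
    · simp only [hμdef, max_eq_right h]; linarith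
    · simp only [hμdef, max_eq_left h]; linarith
  have hB1 : ∀ n d, d ∈ Sn n → (n, d) ∉ SQ → Δ n d ≤ lam :=
    fun n d hd hnd => Finset.le_inf' _ _ (fun p hp => hSQtop p hp (n, d) hd hnd)
  have hB : ∀ n d, (n, d) ∉ SQ → Δ n d ≤ lam + μ n := by
    intro n d hnd
    by_cases hd : d ∈ Sn n
    · have := hB1 n d hd hnd; linarith [hμ0 n]
    · have h1 : Δ n d ≤ s n :=
        Finset.le_inf' _ _ (fun d' hd' => hSntop n d' hd' d hd)
      have h2 : s n - lam ≤ μ n := le_max_left _ _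
      linarith
  -- fibers
  set T : Fin N → Finset (Fin D) :=
    fun n => Finset.univ.filter (fun d => (n, d) ∈ SQ) with hTdef
  have hT : ∀ n, T n ⊆ Sn n := by
    intro n d hd
    exact hSQsub (n, d) (Finset.mem_filter.mp hd).2
  have hrowsum : ∀ n, (∑ d, (if (n, d) ∈ SQ then (1 : ℝ) else 0)) = (T n).card := by
    intro n
    rw [Finset.sum_boole]
  have htotal : (∑ n, ∑ d, (if (n, d) ∈ SQ then (1 : ℝ) else 0)) = (Q : ℝ) := by
    have h1 : (∑ n, ∑ d, (if (n, d) ∈ SQ then (1 : ℝ) else 0)) =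
        ∑ p : Fin N × Fin D, (if p ∈ SQ then (1 : ℝ) else 0) :=
      (Fintype.sum_prod_type (fun p : Fin N × Fin D => if p ∈ SQ then (1 : ℝ) else 0)).symm
    rw [h1, ← hSQcard]
    simp [Finset.sum_boole, Finset.filter_mem_eq_inter]
  have hext : ∀ g : Fin N × Fin D → ℝ,
      (∑ p ∈ SQ, g p) = ∑ n, ∑ d, (if (n, d) ∈ SQ then g (n, d) else 0) := by
    intro g
    have h1 : (∑ n, ∑ d, (if (n, d) ∈ SQ then g (n, d) else 0)) =
        ∑ p : Fin N × Fin D, (if p ∈ SQ then g p else 0) :=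
      (Fintype.sum_prod_type (fun p : Fin N × Fin D => if p ∈ SQ then g p else 0)).symm
    rw [h1, Finset.sum_ite_mem]
    simp
  have hcard : ∀ n, μ n * ((T n).card : ℝ) = μ n * (q : ℝ) := by
    intro n
    rcases eq_or_lt_of_le (hμ0 n) with h | h
    · rw [← h]; ring
    · have hsl : lam < s n := by
        by_contra h'
        push_neg at h'
        have : μ n = 0 := by simp only [hμdef]; rw [max_eq_right]; linarith
        linarith
      have hsub : Sn n ⊆ T n := by
        intro d hd
        rw [hTdef]
        simp only [Finset.mem_filter, Finset.mem_univ, true_and]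
        by_contra hnd
        have h1 := hB1 n d hd hnd
        have h2 : s n ≤ Δ n d := Finset.inf'_le _ hd
        linarith
      rw [Finset.Subset.antisymm (hT n) hsub, hSncard]
  -- pointwise identity for the greedy value
  have hpoint : ∀ n d, (if (n, d) ∈ SQ then Δ n d else 0) =
      (lam + μ n) * (if (n, d) ∈ SQ then (1 : ℝ) else 0) +
        max (Δ n d - (lam + μ n)) 0 := by
    intro n d
    by_cases h : (n, d) ∈ SQ
    · have := hA (n, d) h
      simp only [h, if_true, mul_one]
      rw [max_eq_left (by linarith)]
      ring
    · have := hB n d h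
      simp only [h, if_false, mul_zero, zero_add]
      rw [max_eq_right (by linarith)]
  have hval : (∑ p ∈ SQ, Δ p.1 p.2) =
      lam * (Q : ℝ) + (∑ n, μ n * (q : ℝ)) +
        ∑ n, ∑ d, max (Δ n d - (lam + μ n)) 0 := by
    rw [hext (fun p => Δ p.1 p.2)]
    have : ∀ n, (∑ d, (if (n, d) ∈ SQ then Δ n d else 0)) =
        (lam + μ n) * ((T n).card : ℝ) + ∑ d, max (Δ n d - (lam + μ n)) 0 := by
      intro n
      rw [Finset.sum_congr rfl (fun d _ => hpoint n d), Finset.sum_add_distrib,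
        ← Finset.mul_sum, hrowsum n]
    rw [Finset.sum_congr rfl (fun n _ => this n), Finset.sum_add_distrib]
    have h2 : (∑ n, (lam + μ n) * ((T n).card : ℝ)) =
        lam * (Q : ℝ) + ∑ n, μ n * (q : ℝ) := by
      have : ∀ n, (lam + μ n) * ((T n).card : ℝ) =
          lam * ((T n).card : ℝ) + μ n * (q : ℝ) := by
        intro n; rw [add_mul, hcard n]
      rw [Finset.sum_congr rfl (fun n _ => this n), Finset.sum_add_distrib]
      congr 1
      rw [← Finset.mul_sum]
      congr 1
      have := htotal
      rw [Finset.sum_congr rfl (fun n _ => hrowsum n)] at this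
      exact this
    rw [h2]
  -- the equality for the indicator matrix
  have hindval : (∑ n, ∑ d, Δ n d * (if (n, d) ∈ SQ then (1 : ℝ) else 0)) =
      ∑ p ∈ SQ, Δ p.1 p.2 := by
    rw [hext (fun p => Δ p.1 p.2)]
    apply Finset.sum_congr rfl; intro n _
    apply Finset.sum_congr rfl; intro d _
    by_cases h : (n, d) ∈ SQ <;> simp [h]
  constructor
  · constructor
    · -- membership
      refine ⟨fun n d => if (n, d) ∈ SQ then (1 : ℝ) else 0, ?_, ?_, ?_, hindval.symm⟩
      · intro n d; by_cases h : (n, d) ∈ SQ <;> simp [h]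
      · rw [htotal]
      · intro n
        rw [hrowsum n]
        have h1 : (T n).card ≤ q := by rw [← hSncard n]; exact Finset.card_le_card (hT n)
        exact_mod_cast h1
    · -- upper bound
      rintro v ⟨α, hbound, htot, hrow, rfl⟩
      rw [hval]
      calc (∑ n, ∑ d, Δ n d * α n d)
          ≤ ∑ n, ∑ d, (lam * α n d + μ n * α n d + max (Δ n d - (lam + μ n)) 0) := by
            apply Finset.sum_le_sum; intro n _
            apply Finset.sum_le_sum; intro d _
            obtain ⟨h0, h1⟩ := hbound n d
            have hm1 : Δ n d - (lam + μ n) ≤ max (Δ n d - (lam + μ n)) 0 := le_max_left _ _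
            have hm2 : (0 : ℝ) ≤ max (Δ n d - (lam + μ n)) 0 := le_max_right _ _
            nlinarith [mul_le_mul_of_nonneg_right hm1 h0,
              mul_le_mul_of_nonneg_left h1 hm2]
        _ = lam * (∑ n, ∑ d, α n d) + (∑ n, μ n * ∑ d, α n d) +
              ∑ n, ∑ d, max (Δ n d - (lam + μ n)) 0 := by
            simp only [Finset.sum_add_distrib, Finset.mul_sum]
        _ ≤ lam * (Q : ℝ) + (∑ n, μ n * (q : ℝ)) +
              ∑ n, ∑ d, max (Δ n d - (lam + μ n)) 0 := by
            refine add_le_add (add_le_add ?_ ?_) le_rfl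
            · exact mul_le_mul_of_nonneg_left htot hlam0
            · apply Finset.sum_le_sum; intro n _
              exact mul_le_mul_of_nonneg_left (hrow n) (hμ0 n)
  · exact hindval
end

section
/- Corollary 4.6, upper bound (validity and tightness): Let A, W, b, X, q, Q, v^{(n,j)}, Ŝ_{nji}, and S_{mj} be as in the context. Then for every row index m of A and every column index j of W: (AX̃W)_{mj} + b_j ≤ S_{mj} for every X̃ ∈ X_{q,Q}(X), and there exists X̃ ∈ X_{q,Q}(X) with (AX̃W)_{mj} + b_j = S_{mj}; i.e., S_{mj} = max_{X̃ ∈ X_{q,Q}(X)} (AX̃W)_{mj} + b_j, so the upper bound is valid and the tightest possible. -/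
open scoped BigOperators

lemma card_filter_val_lt {D k : ℕ} (hk : k ≤ D) :
    (Finset.univ.filter fun i : Fin D => (i : ℕ) < k).card = k := by
  have himg : (Finset.univ.filter fun i : Fin D => (i : ℕ) < k)
      = Finset.image (Fin.castLE hk) Finset.univ := by
    ext i
    simp only [Finset.mem_filter, Finset.mem_univ, true_and, Finset.mem_image]
    constructor
    · intro hi; exact ⟨⟨(i:ℕ), hi⟩, Fin.ext rfl⟩
    · rintro ⟨j, rfl⟩; exact j.2
  rw [himg, Finset.card_image_of_injective _ (Fin.castLE_injective hk)]
  simp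

lemma sum_le_sum_topk {D : ℕ} (f : Fin D → ℝ)
    (hf : ∀ i i' : Fin D, i ≤ i' → f i' ≤ f i) (s : Finset (Fin D)) :
    ∑ d ∈ s, f d ≤ ∑ i ∈ Finset.univ.filter (fun i : Fin D => (i : ℕ) < s.card), f i := by
  set k := s.card with hk
  set t := Finset.univ.filter (fun i : Fin D => (i : ℕ) < k) with ht
  have hkD : k ≤ D := by
    simpa [hk, Fintype.card_fin] using Finset.card_le_univ s
  have hcards : s.card = t.card := by rw [ht, card_filter_val_lt hkD]
  have hsd : (s \ t).card = (t \ s).card := Finset.card_sdiff_comm hcards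
  have h1 : ∑ d ∈ s ∩ t, f d + ∑ d ∈ s \ t, f d = ∑ d ∈ s, f d :=
    Finset.sum_inter_add_sum_sdiff s t f
  have h2 : ∑ d ∈ t ∩ s, f d + ∑ d ∈ t \ s, f d = ∑ d ∈ t, f d :=
    Finset.sum_inter_add_sum_sdiff t s f
  have hint : s ∩ t = t ∩ s := Finset.inter_comm s t
  have key : ∑ d ∈ s \ t, f d ≤ ∑ d ∈ t \ s, f d := by
    have e := Finset.equivOfCardEq hsd
    have step : ∀ x : (s \ t : Finset (Fin D)), f x ≤ f (e x) := by
      intro x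
      apply hf
      have hx : ¬ ((x : Fin D) : ℕ) < k := by
        have := x.2
        simp only [ht, Finset.mem_sdiff, Finset.mem_filter, Finset.mem_univ, true_and] at this
        tauto
      have hex : (((e x : Fin D)) : ℕ) < k := by
        have := (e x).2
        simp only [ht, Finset.mem_sdiff, Finset.mem_filter, Finset.mem_univ, true_and] at this
        tauto
      have : (((e x : Fin D)) : ℕ) ≤ ((x : Fin D) : ℕ) := by omega
      exact this
    calc ∑ d ∈ s \ t, f d = ∑ x : (s \ t : Finset (Fin D)), f x :=
          (Finset.sum_coe_sort _ f).symm
      _ ≤ ∑ x : (s \ t : Finset (Fin D)), f (e x) :=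
          Finset.sum_le_sum fun x _ => step x
      _ = ∑ y : (t \ s : Finset (Fin D)), f y := Fintype.sum_equiv e _ _ (fun x => rfl)
      _ = ∑ d ∈ t \ s, f d := Finset.sum_coe_sort _ f
  calc ∑ d ∈ s, f d = ∑ d ∈ s ∩ t, f d + ∑ d ∈ s \ t, f d := h1.symm
    _ ≤ ∑ d ∈ t ∩ s, f d + ∑ d ∈ t \ s, f d := by rw [hint]; linarith
    _ = ∑ i ∈ t, f i := h2

lemma card_filter_prod {N q : ℕ} (P : Fin N × Fin q → Prop) [DecidablePred P] :
    (Finset.univ.filter P).card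
      = ∑ n : Fin N, (Finset.univ.filter fun i : Fin q => P (n, i)).card := by
  rw [Finset.card_filter, Fintype.sum_prod_type]
  exact Finset.sum_congr rfl fun n _ => (Finset.card_filter _ _).symm

lemma sum_filter_prod {N q : ℕ} (P : Fin N × Fin q → Prop) [DecidablePred P]
    (f : Fin N × Fin q → ℝ) :
    ∑ p ∈ Finset.univ.filter P, f p
      = ∑ n : Fin N, ∑ i ∈ Finset.univ.filter (fun i : Fin q => P (n, i)), f (n, i) := by
  rw [Finset.sum_filter, Fintype.sum_prod_type]
  exact Finset.sum_congr rfl fun n _ => (Finset.sum_filter _ _).symm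

lemma mul3_apply {M N D h : ℕ} (A : Matrix (Fin M) (Fin N) ℝ) (Y : Matrix (Fin N) (Fin D) ℝ)
    (W : Matrix (Fin D) (Fin h) ℝ) (m : Fin M) (j : Fin h) :
    (A * Y * W) m j = ∑ n : Fin N, A m n * ∑ d : Fin D, Y n d * W d j := by
  simp only [Matrix.mul_apply, Finset.sum_mul, Finset.mul_sum, mul_assoc]
  exact Finset.sum_comm


set_option maxHeartbeats 1000000 in
/-- **Corollary 4.6, upper bound (validity and tightness).**  With
`v^{(n,j)}_d = (1 − X_{nd})·[W_{dj}]₊ + X_{nd}·[W_{dj}]₋`, `Shat_{nji}` the `i`-th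
largest entry of `v^{(n,j)}` (witnessed by a decreasing enumeration `e`), and
`S_{mj}` equal to the sum of the `min(Q, N·q)` largest elements of the family
`(A_{mn}·Shat_{nji})_{n, i≤q}` (formalized as the attained maximum of the subset sums of
cardinality `min(Q, N·q)`) plus `(AXW)_{mj} + b_j`, we have for every `m`, `j`:
`(AX̃W)_{mj} + b_j ≤ S_{mj}` for every `X̃ ∈ X_{q,Q}(X)`, with equality for some
`X̃ ∈ X_{q,Q}(X)`; i.e. `S` is a valid and tightest-possible upper bound. -/
theorem upper_bound_valid_tight {M N D h : ℕ} (q Q : ℕ) (hqD : q ≤ D)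
    (X : Matrix (Fin N) (Fin D) ℝ) (hX : ∀ n d, X n d = 0 ∨ X n d = 1)
    (A : Matrix (Fin M) (Fin N) ℝ) (hA : ∀ m n, 0 ≤ A m n)
    (W : Matrix (Fin D) (Fin h) ℝ) (b : Fin h → ℝ)
    (v : Fin N → Fin h → Fin D → ℝ)
    (hv : ∀ n j d, v n j d = (1 - X n d) * max (W d j) 0 + X n d * max (-W d j) 0)
    (Shat : Fin N → Fin h → Fin q → ℝ)
    (hShat : ∀ n j, ∃ e : Fin D ≃ Fin D,
      (∀ i i' : Fin D, i ≤ i' → v n j (e i') ≤ v n j (e i)) ∧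
      ∀ i : Fin q, Shat n j i = v n j (e (Fin.castLE hqD i)))
    (S : Matrix (Fin M) (Fin h) ℝ)
    (hS : ∀ m j, ∃ topsum : ℝ,
      IsGreatest {s : ℝ | ∃ T : Finset (Fin N × Fin q), T.card = min Q (N * q) ∧
        s = ∑ p ∈ T, A m p.1 * Shat p.1 j p.2} topsum ∧
      S m j = topsum + (A * X * W) m j + b j) :
    ∀ (m : Fin M) (j : Fin h),
      (∀ Xt ∈ XsetBin X q Q, (A * Xt * W) m j + b j ≤ S m j) ∧
      (∃ Xt ∈ XsetBin X q Q, (A * Xt * W) m j + b j = S m j) := by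
  classical
  intro m j
  obtain ⟨topsum, ⟨hmem, hub⟩, hSmj⟩ := hS m j
  obtain ⟨T0, hT0card, hT0sum⟩ := hmem
  choose e he1 he2 using hShat
  have hv0 : ∀ n d, 0 ≤ v n j d := by
    intro n d
    rcases hX n d with h0 | h0 <;> simp [hv, h0, le_max_right]
  have hShat0 : ∀ (n : Fin N) (i : Fin q), 0 ≤ Shat n j i := by
    intro n i; rw [he2 n j i]; exact hv0 n _
  have hFnn : ∀ p : Fin N × Fin q, 0 ≤ A m p.1 * Shat p.1 j p.2 :=
    fun p => mul_nonneg (hA m p.1) (hShat0 p.1 p.2)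
  have hcardUniv : (Finset.univ : Finset (Fin N × Fin q)).card = N * q := by simp
  have diffeq : ∀ Y : Matrix (Fin N) (Fin D) ℝ,
      (A * Y * W) m j - (A * X * W) m j
        = ∑ n : Fin N, A m n * ∑ d : Fin D, (Y n d - X n d) * W d j := by
    intro Y
    rw [mul3_apply, mul3_apply, ← Finset.sum_sub_distrib]
    refine Finset.sum_congr rfl fun n _ => ?_
    rw [← mul_sub, ← Finset.sum_sub_distrib]
    congr 1
    refine Finset.sum_congr rfl fun d _ => ?_
    ring
  constructor
  · -- validity
    intro Xt hXt
    obtain ⟨hbin, hQtot, hqrow⟩ := hXt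
    set k : Fin N → ℕ := fun n => (Finset.univ.filter fun d : Fin D => Xt n d ≠ X n d).card
      with hk
    have rowbound : ∀ n : Fin N,
        ∑ d : Fin D, (Xt n d - X n d) * W d j
          ≤ ∑ i ∈ Finset.univ.filter (fun i : Fin q => (i : ℕ) < k n), Shat n j i := by
      intro n
      set Dn := Finset.univ.filter fun d : Fin D => Xt n d ≠ X n d with hDn
      have hkn : Dn.card = k n := rfl
      have hkq : Dn.card ≤ q := hqrow n
      have e1 : ∑ d : Fin D, (Xt n d - X n d) * W d j
          = ∑ d ∈ Dn, (Xt n d - X n d) * W d j := by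
        refine (Finset.sum_filter_of_ne ?_).symm
        intro d _ hfne heq
        exact hfne (by rw [heq, sub_self, zero_mul])
      have e2 : ∑ d ∈ Dn, (Xt n d - X n d) * W d j ≤ ∑ d ∈ Dn, v n j d := by
        refine Finset.sum_le_sum fun d _ => ?_
        rw [hv n j d]
        rcases hX n d with h0 | h0 <;> rcases hbin n d with g0 | g0 <;> rw [h0, g0] <;>
          nlinarith [le_max_left (W d j) 0, le_max_right (W d j) 0,
            le_max_left (-W d j) 0, le_max_right (-W d j) 0]
      set E := e n j with hE
      set s' := Dn.image (fun d => E.symm d) with hs'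
      have hs'card : s'.card = Dn.card :=
        Finset.card_image_of_injective _ E.symm.injective
      have e3 : ∑ d ∈ Dn, v n j d = ∑ i ∈ s', v n j (E i) := by
        rw [hs', Finset.sum_image (fun x _ y _ hxy => E.symm.injective hxy)]
        simp
      have e4 : ∑ i ∈ s', v n j (E i)
          ≤ ∑ i ∈ Finset.univ.filter (fun i : Fin D => (i : ℕ) < s'.card), v n j (E i) :=
        sum_le_sum_topk _ (he1 n j) s'
      have e5 : Finset.univ.filter (fun i : Fin D => (i : ℕ) < Dn.card)
          = (Finset.univ.filter (fun i : Fin q => (i : ℕ) < Dn.card)).image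
              (Fin.castLE hqD) := by
        ext i
        simp only [Finset.mem_filter, Finset.mem_univ, true_and, Finset.mem_image]
        constructor
        · intro hi
          exact ⟨⟨(i : ℕ), lt_of_lt_of_le hi hkq⟩, hi, Fin.ext rfl⟩
        · rintro ⟨i', hi', rfl⟩
          exact hi'
      have e6 : ∑ i ∈ Finset.univ.filter (fun i : Fin D => (i : ℕ) < Dn.card), v n j (E i)
          = ∑ i ∈ Finset.univ.filter (fun i : Fin q => (i : ℕ) < Dn.card), Shat n j i := by
        rw [e5, Finset.sum_image (fun x _ y _ hxy => Fin.castLE_injective hqD hxy)]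
        exact Finset.sum_congr rfl fun i _ => (he2 n j i).symm
      rw [e1]
      refine le_trans e2 ?_
      rw [e3]
      refine le_trans e4 ?_
      rw [hs'card, e6, hkn]
    have step2 : ∑ n : Fin N, A m n * ∑ d : Fin D, (Xt n d - X n d) * W d j
        ≤ ∑ n : Fin N, A m n * ∑ i ∈ Finset.univ.filter (fun i : Fin q => (i : ℕ) < k n),
            Shat n j i :=
      Finset.sum_le_sum fun n _ => mul_le_mul_of_nonneg_left (rowbound n) (hA m n)
    have step3 : ∑ n : Fin N, A m n * ∑ i ∈ Finset.univ.filter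
          (fun i : Fin q => (i : ℕ) < k n), Shat n j i
        = ∑ p ∈ Finset.univ.filter (fun p : Fin N × Fin q => (p.2 : ℕ) < k p.1),
            A m p.1 * Shat p.1 j p.2 := by
      rw [sum_filter_prod (fun p : Fin N × Fin q => (p.2 : ℕ) < k p.1)]
      exact Finset.sum_congr rfl fun n _ => (Finset.mul_sum _ _ _)
    have hcardT : (Finset.univ.filter (fun p : Fin N × Fin q => (p.2 : ℕ) < k p.1)).card
        ≤ min Q (N * q) := by
      refine le_min ?_ ?_
      · have h1 : (Finset.univ.filter (fun p : Fin N × Fin q => (p.2 : ℕ) < k p.1)).card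
            = ∑ n : Fin N, k n := by
          rw [card_filter_prod (fun p : Fin N × Fin q => (p.2 : ℕ) < k p.1)]
          exact Finset.sum_congr rfl fun n _ => card_filter_val_lt (hqrow n)
        have h2 : ∑ n : Fin N, k n
            = (Finset.univ.filter fun p : Fin N × Fin D => Xt p.1 p.2 ≠ X p.1 p.2).card := by
          rw [card_filter_prod (fun p : Fin N × Fin D => Xt p.1 p.2 ≠ X p.1 p.2)]
        rw [h1, h2]; exact hQtot
      · rw [← hcardUniv]; exact Finset.card_le_univ _
    obtain ⟨T', hTT', -, hT'card⟩ :=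
      Finset.exists_subsuperset_card_eq (Finset.subset_univ _) hcardT
        (by rw [hcardUniv]; exact min_le_right _ _)
    have step4 : ∑ p ∈ Finset.univ.filter (fun p : Fin N × Fin q => (p.2 : ℕ) < k p.1),
          A m p.1 * Shat p.1 j p.2 ≤ ∑ p ∈ T', A m p.1 * Shat p.1 j p.2 :=
      Finset.sum_le_sum_of_subset_of_nonneg hTT' fun p _ _ => hFnn p
    have step5 : ∑ p ∈ T', A m p.1 * Shat p.1 j p.2 ≤ topsum := hub ⟨T', hT'card, rfl⟩
    have hd := diffeq Xt
    linarith
  · -- tightness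
    set Xt : Matrix (Fin N) (Fin D) ℝ := fun n d =>
      if ∃ i : Fin q, (n, i) ∈ T0 ∧ e n j (Fin.castLE hqD i) = d ∧ v n j d ≠ 0
      then 1 - X n d else X n d with hXtdef
    have hflipval : ∀ n d,
        (∃ i : Fin q, (n, i) ∈ T0 ∧ e n j (Fin.castLE hqD i) = d ∧ v n j d ≠ 0) →
        Xt n d = 1 - X n d := by
      intro n d hc; rw [hXtdef]; exact if_pos hc
    have hnoflip : ∀ n d,
        ¬ (∃ i : Fin q, (n, i) ∈ T0 ∧ e n j (Fin.castLE hqD i) = d ∧ v n j d ≠ 0) →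
        Xt n d = X n d := by
      intro n d hc; rw [hXtdef]; exact if_neg hc
    have hne10 : ∀ n d, (1 : ℝ) - X n d ≠ X n d := by
      intro n d; rcases hX n d with h0 | h0 <;> rw [h0] <;> norm_num
    have hDneq : ∀ n, (Finset.univ.filter fun d : Fin D => Xt n d ≠ X n d)
        = (Finset.univ.filter fun i : Fin q =>
            (n, i) ∈ T0 ∧ v n j (e n j (Fin.castLE hqD i)) ≠ 0).image
              (fun i => e n j (Fin.castLE hqD i)) := by
      intro n
      ext d
      simp only [Finset.mem_filter, Finset.mem_univ, true_and, Finset.mem_image]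
      constructor
      · intro hd
        by_cases hc : ∃ i : Fin q, (n, i) ∈ T0 ∧ e n j (Fin.castLE hqD i) = d ∧ v n j d ≠ 0
        · obtain ⟨i, hiT, hied, hv0'⟩ := hc
          exact ⟨i, ⟨hiT, by rw [hied]; exact hv0'⟩, hied⟩
        · exact absurd (hnoflip n d hc) hd
      · rintro ⟨i, ⟨hiT, hvne⟩, rfl⟩
        rw [hflipval n _ ⟨i, hiT, rfl, hvne⟩]
        exact hne10 n _
    have hinj : ∀ n, ∀ x ∈ (Finset.univ : Finset (Fin q)), ∀ y ∈ (Finset.univ : Finset (Fin q)),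
        e n j (Fin.castLE hqD x) = e n j (Fin.castLE hqD y) → x = y :=
      fun n x _ y _ hxy => Fin.castLE_injective hqD ((e n j).injective hxy)
    have hmemX : Xt ∈ XsetBin X q Q := by
      refine ⟨?_, ?_, ?_⟩
      · intro n d
        rw [hXtdef]
        dsimp only
        split
        · rcases hX n d with h0 | h0 <;> rw [h0] <;> norm_num
        · exact hX n d
      · have h1 : (Finset.univ.filter fun p : Fin N × Fin D => Xt p.1 p.2 ≠ X p.1 p.2).card
            = ∑ n : Fin N, (Finset.univ.filter fun d : Fin D => Xt n d ≠ X n d).card :=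
          card_filter_prod (fun p : Fin N × Fin D => Xt p.1 p.2 ≠ X p.1 p.2)
        rw [h1]
        have h2 : ∀ n : Fin N, (Finset.univ.filter fun d : Fin D => Xt n d ≠ X n d).card
            ≤ (Finset.univ.filter fun i : Fin q =>
                (n, i) ∈ T0 ∧ v n j (e n j (Fin.castLE hqD i)) ≠ 0).card := by
          intro n; rw [hDneq n]; exact Finset.card_image_le
        refine le_trans (Finset.sum_le_sum fun n _ => h2 n) ?_
        have h3 : ∑ n : Fin N, (Finset.univ.filter fun i : Fin q =>
              (n, i) ∈ T0 ∧ v n j (e n j (Fin.castLE hqD i)) ≠ 0).card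
            = (Finset.univ.filter fun p : Fin N × Fin q =>
                (p.1, p.2) ∈ T0 ∧ v p.1 j (e p.1 j (Fin.castLE hqD p.2)) ≠ 0).card :=
          (card_filter_prod (fun p : Fin N × Fin q =>
            (p.1, p.2) ∈ T0 ∧ v p.1 j (e p.1 j (Fin.castLE hqD p.2)) ≠ 0)).symm
        rw [h3]
        have h4 : (Finset.univ.filter fun p : Fin N × Fin q =>
              (p.1, p.2) ∈ T0 ∧ v p.1 j (e p.1 j (Fin.castLE hqD p.2)) ≠ 0) ⊆ T0 := by
          intro p hp
          simp only [Finset.mem_filter, Finset.mem_univ, true_and] at hp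
          simpa using hp.1
        calc (Finset.univ.filter fun p : Fin N × Fin q =>
              (p.1, p.2) ∈ T0 ∧ v p.1 j (e p.1 j (Fin.castLE hqD p.2)) ≠ 0).card
            ≤ T0.card := Finset.card_le_card h4
          _ = min Q (N * q) := hT0card
          _ ≤ Q := min_le_left _ _
      · intro n
        rw [hDneq n]
        calc ((Finset.univ.filter fun i : Fin q =>
              (n, i) ∈ T0 ∧ v n j (e n j (Fin.castLE hqD i)) ≠ 0).image
                (fun i => e n j (Fin.castLE hqD i))).card
            ≤ (Finset.univ.filter fun i : Fin q =>
                (n, i) ∈ T0 ∧ v n j (e n j (Fin.castLE hqD i)) ≠ 0).card :=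
              Finset.card_image_le
          _ ≤ (Finset.univ : Finset (Fin q)).card := Finset.card_le_univ _
          _ = q := by simp
    refine ⟨Xt, hmemX, ?_⟩
    have rowval : ∀ n : Fin N, ∑ d : Fin D, (Xt n d - X n d) * W d j
        = ∑ i ∈ (Finset.univ.filter fun i : Fin q =>
            (n, i) ∈ T0 ∧ v n j (e n j (Fin.castLE hqD i)) ≠ 0), Shat n j i := by
      intro n
      have e1 : ∑ d : Fin D, (Xt n d - X n d) * W d j
          = ∑ d ∈ Finset.univ.filter (fun d : Fin D => Xt n d ≠ X n d),
              (Xt n d - X n d) * W d j := by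
        refine (Finset.sum_filter_of_ne ?_).symm
        intro d _ hfne heq
        exact hfne (by rw [heq, sub_self, zero_mul])
      rw [e1, hDneq n, Finset.sum_image (fun x _ y _ hxy => Fin.castLE_injective hqD ((e n j).injective hxy))]
      refine Finset.sum_congr rfl fun i hi => ?_
      simp only [Finset.mem_filter, Finset.mem_univ, true_and] at hi
      obtain ⟨hiT, hvne⟩ := hi
      have hx : Xt n (e n j (Fin.castLE hqD i)) = 1 - X n (e n j (Fin.castLE hqD i)) :=
        hflipval n _ ⟨i, hiT, rfl, hvne⟩
      set d := e n j (Fin.castLE hqD i) with hd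
      rw [hx, he2 n j i, ← hd, hv n j d]
      rcases hX n d with h0 | h0 <;> rw [h0]
      · have h1 : max (W d j) 0 ≠ 0 := by
          intro hz; apply hvne
          rw [← hd] at *
          rw [hv n j d, h0, hz]; ring
        have h2 : 0 < W d j := by
          rcases le_or_gt (W d j) 0 with hle | hlt
          · exact absurd (max_eq_right hle) h1
          · exact hlt
        rw [max_eq_left h2.le]; ring
      · have h1 : max (-W d j) 0 ≠ 0 := by
          intro hz; apply hvne
          rw [← hd] at *
          rw [hv n j d, h0, hz]; ring
        have h2 : 0 < -W d j := by
          rcases le_or_gt (-W d j) 0 with hle | hlt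
          · exact absurd (max_eq_right hle) h1
          · exact hlt
        rw [max_eq_left h2.le]; ring
    have s1 : ∑ p ∈ Finset.univ.filter (fun p : Fin N × Fin q =>
          (p.1, p.2) ∈ T0 ∧ v p.1 j (e p.1 j (Fin.castLE hqD p.2)) ≠ 0),
            A m p.1 * Shat p.1 j p.2
        = ∑ n : Fin N, A m n * ∑ d : Fin D, (Xt n d - X n d) * W d j := by
      rw [sum_filter_prod (fun p : Fin N × Fin q =>
        (p.1, p.2) ∈ T0 ∧ v p.1 j (e p.1 j (Fin.castLE hqD p.2)) ≠ 0)]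
      refine Finset.sum_congr rfl fun n _ => ?_
      rw [rowval n, Finset.mul_sum]
    have s2 : ∑ p ∈ Finset.univ.filter (fun p : Fin N × Fin q =>
          (p.1, p.2) ∈ T0 ∧ v p.1 j (e p.1 j (Fin.castLE hqD p.2)) ≠ 0),
            A m p.1 * Shat p.1 j p.2
        = ∑ p ∈ T0, A m p.1 * Shat p.1 j p.2 := by
      refine Finset.sum_subset ?_ ?_
      · intro p hp
        simp only [Finset.mem_filter, Finset.mem_univ, true_and] at hp
        simpa using hp.1
      · intro p hpT0 hpnot
        simp only [Finset.mem_filter, Finset.mem_univ, true_and, not_and, not_not] at hpnot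
        have hv0' : v p.1 j (e p.1 j (Fin.castLE hqD p.2)) = 0 := hpnot (by simpa using hpT0)
        rw [he2 p.1 j p.2, hv0', mul_zero]
    have total : (A * Xt * W) m j - (A * X * W) m j = topsum := by
      rw [diffeq Xt, ← s1, s2, ← hT0sum]
    linarith
end

section
/- Corollary 4.6, lower bound (validity and tightness): Let A, W, b, X, q, Q, v̂^{(n,j)}, R̂_{nji}, and R_{mj} be as in the context. Then for every row index m of A and every column index j of W: (AX̃W)_{mj} + b_j ≥ R_{mj} for every X̃ ∈ X_{q,Q}(X), and there exists X̃ ∈ X_{q,Q}(X) with (AX̃W)_{mj} + b_j = R_{mj}; i.e., R_{mj} = min_{X̃ ∈ X_{q,Q}(X)} (AX̃W)_{mj} + b_j, so the lower bound is valid and the tightest possible. -/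
lemma auxStrictMonoLe {k : ℕ} (g : Fin k → ℕ) (hg : StrictMono g) (t : Fin k) : (t : ℕ) ≤ g t := by
  have H : ∀ v : ℕ, ∀ t : Fin k, (t : ℕ) = v → v ≤ g t := by
    intro v
    induction v with
    | zero => intro t _; exact Nat.zero_le _
    | succ i ih =>
      intro t ht
      have hik : i < k := by omega
      have h1 := ih ⟨i, hik⟩ rfl
      have h2 := hg (show (⟨i, hik⟩ : Fin k) < t by simp [Fin.lt_def, ht])
      omega
  exact H _ t rfl

lemma auxSumTop {D k : ℕ} (hk : k ≤ D) (w : Fin D → ℝ)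
    (hw : ∀ i i' : Fin D, i ≤ i' → w i' ≤ w i)
    (S : Finset (Fin D)) (hS : S.card = k) :
    ∑ d ∈ S, w d ≤ ∑ t : Fin k, w (Fin.castLE hk t) := by
  have h1 : ∑ d ∈ S, w d = ∑ t : Fin k, w (S.orderEmbOfFin hS t) := by
    rw [← Finset.sum_coe_sort S w]
    exact (Equiv.sum_comp (S.orderIsoOfFin hS).toEquiv (fun x : S => w x)).symm
  rw [h1]
  apply Finset.sum_le_sum
  intro t _
  apply hw
  have : (t : ℕ) ≤ ((S.orderEmbOfFin hS t : Fin D) : ℕ) := by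
    apply auxStrictMonoLe (fun t => ((S.orderEmbOfFin hS t : Fin D) : ℕ))
    intro a b hab
    exact (Fin.lt_def).mp ((S.orderEmbOfFin hS).strictMono hab)
  exact this

lemma auxCardFilterLt {q k : ℕ} (hkq : k ≤ q) :
    (Finset.univ.filter fun i : Fin q => (i : ℕ) < k).card = k := by
  have : (Finset.univ.filter fun i : Fin q => (i : ℕ) < k)
      = Finset.image (Fin.castLE hkq) Finset.univ := by
    ext i
    simp only [Finset.mem_filter, Finset.mem_univ, true_and, Finset.mem_image]
    constructor
    · intro hi; exact ⟨⟨i, hi⟩, rfl⟩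
    · rintro ⟨t, rfl⟩; exact t.2
  rw [this, Finset.card_image_of_injective _ (Fin.castLE_injective hkq), Finset.card_univ,
    Fintype.card_fin]



open scoped BigOperators

/-- **Corollary 4.6, lower bound (validity and tightness).**  With
`v̂^{(n,j)}_d = X_{nd}·[W_{dj}]₊ + (1 − X_{nd})·[W_{dj}]₋`, `R̂_{nji}` the `i`-th
largest entry of `v̂^{(n,j)}` (witnessed by a decreasing enumeration `e`), and
`R_{mj}` equal to minus the sum of the `min(Q, N·q)` largest elements of the family
`(A_{mn}·R̂_{nji})_{n, i≤q}` (formalized as the attained maximum of the subset sums of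
cardinality `min(Q, N·q)`) plus `(AXW)_{mj} + b_j`, we have for every `m`, `j`:
`(AX̃W)_{mj} + b_j ≥ R_{mj}` for every `X̃ ∈ X_{q,Q}(X)`, with equality for some
`X̃ ∈ X_{q,Q}(X)`; i.e. `R` is a valid and tightest-possible lower bound. -/
theorem lower_bound_valid_tight {M N D h : ℕ} (q Q : ℕ) (hqD : q ≤ D)
    (X : Matrix (Fin N) (Fin D) ℝ) (hX : ∀ n d, X n d = 0 ∨ X n d = 1)
    (A : Matrix (Fin M) (Fin N) ℝ) (hA : ∀ m n, 0 ≤ A m n)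
    (W : Matrix (Fin D) (Fin h) ℝ) (b : Fin h → ℝ)
    (vhat : Fin N → Fin h → Fin D → ℝ)
    (hvhat : ∀ n j d, vhat n j d = X n d * max (W d j) 0 + (1 - X n d) * max (-W d j) 0)
    (Rhat : Fin N → Fin h → Fin q → ℝ)
    (hRhat : ∀ n j, ∃ e : Fin D ≃ Fin D,
      (∀ i i' : Fin D, i ≤ i' → vhat n j (e i') ≤ vhat n j (e i)) ∧
      ∀ i : Fin q, Rhat n j i = vhat n j (e (Fin.castLE hqD i)))
    (R : Matrix (Fin M) (Fin h) ℝ)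
    (hR : ∀ m j, ∃ topsum : ℝ,
      IsGreatest {s : ℝ | ∃ T : Finset (Fin N × Fin q), T.card = min Q (N * q) ∧
        s = ∑ p ∈ T, A m p.1 * Rhat p.1 j p.2} topsum ∧
      R m j = -topsum + (A * X * W) m j + b j) :
    ∀ (m : Fin M) (j : Fin h),
      (∀ Xt ∈ XsetBin X q Q, R m j ≤ (A * Xt * W) m j + b j) ∧
      (∃ Xt ∈ XsetBin X q Q, (A * Xt * W) m j + b j = R m j) := by
  intro m j
  obtain ⟨topsum, ⟨⟨T', hT'card, hT'sum⟩, htub⟩, hReq⟩ := hR m j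
  choose e he1 he2 using fun n => hRhat n j
  -- basic nonnegativity
  have hv0 : ∀ n d, 0 ≤ vhat n j d := by
    intro n d
    rw [hvhat]
    rcases hX n d with hx | hx <;> simp [hx, le_max_right]
  have hR0 : ∀ n (i : Fin q), 0 ≤ Rhat n j i := by
    intro n i; rw [he2]; exact hv0 _ _
  -- entry formula
  have hentry : ∀ Y : Matrix (Fin N) (Fin D) ℝ,
      (A * Y * W) m j = ∑ n, ∑ d, A m n * Y n d * W d j := by
    intro Y
    simp only [Matrix.mul_apply, Finset.sum_mul]
    rw [Finset.sum_comm]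
  constructor
  · -- validity
    rintro Xt ⟨hbin, hQ, hq⟩
    set S : Fin N → Finset (Fin D) := fun n => Finset.univ.filter fun d => Xt n d ≠ X n d with hS
    have hkq : ∀ n, (S n).card ≤ q := hq
    have hsplit : (Finset.univ.filter fun p : Fin N × Fin D => Xt p.1 p.2 ≠ X p.1 p.2).card
        = ∑ n, (S n).card := by
      rw [Finset.card_filter, Fintype.sum_prod_type]
      simp [hS, Finset.card_filter]
    have hsumk : ∑ n, (S n).card ≤ Q := hsplit ▸ hQ
    -- per-row bound
    have hrow : ∀ n, ∑ d ∈ S n, vhat n j d ≤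
        ∑ i ∈ Finset.univ.filter (fun i : Fin q => (i : ℕ) < (S n).card), Rhat n j i := by
      intro n
      set k := (S n).card with hk
      have hkD : k ≤ D := le_trans (hkq n) hqD
      set S' : Finset (Fin D) := (S n).map (e n).symm.toEmbedding with hS'
      have hS'card : S'.card = k := by rw [hS', Finset.card_map]
      have h1 : ∑ d ∈ S n, vhat n j d = ∑ d ∈ S', vhat n j (e n d) := by
        rw [hS', Finset.sum_map]
        simp
      have h2 := auxSumTop hkD (fun d => vhat n j (e n d)) (he1 n) S' hS'card
      have h3 : ∑ t : Fin k, vhat n j (e n (Fin.castLE hkD t))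
          = ∑ i ∈ Finset.univ.filter (fun i : Fin q => (i : ℕ) < k), Rhat n j i := by
        apply Finset.sum_bij (fun (t : Fin k) (_ : t ∈ Finset.univ) => (Fin.castLE (hkq n) t : Fin q))
        · intro t _
          simp [Fin.castLE, t.2]
        · intro t1 _ t2 _ hteq
          exact Fin.castLE_injective _ hteq
        · intro i hi
          simp only [Finset.mem_filter, Finset.mem_univ, true_and] at hi
          exact ⟨⟨i, hi⟩, Finset.mem_univ _, rfl⟩
        · intro t _
          rw [he2]
          rfl
      rw [h1]
      exact le_trans h2 (le_of_eq h3)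
    -- assemble the global bound
    set T0 : Finset (Fin N × Fin q) :=
      Finset.univ.filter (fun p : Fin N × Fin q => (p.2 : ℕ) < (S p.1).card) with hT0
    have hT0card : T0.card = ∑ n, (S n).card := by
      rw [hT0, Finset.card_filter, Fintype.sum_prod_type]
      refine Finset.sum_congr rfl fun n _ => ?_
      rw [← Finset.card_filter]
      exact auxCardFilterLt (hkq n)
    have hT0le : T0.card ≤ min Q (N * q) := by
      rw [hT0card]
      refine le_min hsumk ?_
      calc ∑ n, (S n).card ≤ ∑ _n : Fin N, q := Finset.sum_le_sum fun n _ => hkq n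
        _ = N * q := by simp [Finset.sum_const, mul_comm]
    obtain ⟨T, hT0T, -, hTcard⟩ := Finset.exists_subsuperset_card_eq
      (Finset.subset_univ T0) hT0le
      (by rw [Finset.card_univ, Fintype.card_prod, Fintype.card_fin, Fintype.card_fin]
          exact min_le_right _ _)
    have hTtop : (∑ p ∈ T, A m p.1 * Rhat p.1 j p.2) ≤ topsum := htub ⟨T, hTcard, rfl⟩
    have hT0sum : ∑ p ∈ T0, A m p.1 * Rhat p.1 j p.2 ≤ ∑ p ∈ T, A m p.1 * Rhat p.1 j p.2 :=
      Finset.sum_le_sum_of_subset_of_nonneg hT0T fun p _ _ =>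
        mul_nonneg (hA m p.1) (hR0 p.1 p.2)
    have hT0eq : ∑ p ∈ T0, A m p.1 * Rhat p.1 j p.2
        = ∑ n, A m n * ∑ i ∈ Finset.univ.filter (fun i : Fin q => (i : ℕ) < (S n).card),
            Rhat n j i := by
      rw [hT0, Finset.sum_filter, Fintype.sum_prod_type]
      refine Finset.sum_congr rfl fun n _ => ?_
      rw [Finset.mul_sum, Finset.sum_filter]
    have key : ∑ n, A m n * ∑ d ∈ S n, vhat n j d ≤ topsum := by
      calc ∑ n, A m n * ∑ d ∈ S n, vhat n j d
          ≤ ∑ n, A m n * ∑ i ∈ Finset.univ.filter (fun i : Fin q => (i : ℕ) < (S n).card),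
              Rhat n j i :=
            Finset.sum_le_sum fun n _ => mul_le_mul_of_nonneg_left (hrow n) (hA m n)
        _ = ∑ p ∈ T0, A m p.1 * Rhat p.1 j p.2 := hT0eq.symm
        _ ≤ ∑ p ∈ T, A m p.1 * Rhat p.1 j p.2 := hT0sum
        _ ≤ topsum := hTtop
    -- entrywise lower bound
    have hterm : ∀ n d, A m n * X n d * W d j
        - (if Xt n d ≠ X n d then A m n * vhat n j d else 0) ≤ A m n * Xt n d * W d j := by
      intro n d
      by_cases heq : Xt n d = X n d
      · simp [heq]
      · simp only [if_pos heq]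
        rcases hX n d with hx | hx <;> rcases hbin n d with hy | hy <;>
          rw [hx] at heq ⊢ <;> rw [hy] at heq ⊢ <;>
          simp only [hvhat, hx] <;>
          first
          | exact absurd rfl heq
          | nlinarith [le_max_left (W d j) 0, le_max_left (-W d j) 0, le_max_right (W d j) 0,
              le_max_right (-W d j) 0, hA m n]
    have hsum1 : (A * X * W) m j - ∑ n, A m n * ∑ d ∈ S n, vhat n j d ≤ (A * Xt * W) m j := by
      rw [hentry X, hentry Xt]
      have hrewr : ∑ n, A m n * ∑ d ∈ S n, vhat n j d
          = ∑ n, ∑ d, (if Xt n d ≠ X n d then A m n * vhat n j d else 0) := by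
        refine Finset.sum_congr rfl fun n _ => ?_
        rw [Finset.mul_sum, hS, Finset.sum_filter]
      rw [hrewr, ← Finset.sum_sub_distrib]
      refine Finset.sum_le_sum fun n _ => ?_
      rw [← Finset.sum_sub_distrib]
      exact Finset.sum_le_sum fun d _ => hterm n d
    rw [hReq]
    linarith
  · -- tightness
    classical
    set P : Fin N × Fin q → Prop := fun p => A m p.1 * Rhat p.1 j p.2 ≠ 0 with hP
    set φ : Fin N × Fin q → Fin N × Fin D :=
      fun p => (p.1, e p.1 (Fin.castLE hqD p.2)) with hφ
    have hφinj : Function.Injective φ := by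
      rintro ⟨n1, i1⟩ ⟨n2, i2⟩ hpe
      simp only [hφ, Prod.mk.injEq] at hpe
      obtain ⟨rfl, h2⟩ := hpe
      exact Prod.ext rfl (Fin.castLE_injective _ ((e n1).injective h2))
    set F : Finset (Fin N × Fin D) := (T'.filter P).image φ with hF
    set Xt : Matrix (Fin N) (Fin D) ℝ :=
      fun n d => if (n, d) ∈ F then 1 - X n d else X n d with hXt
    have hne1 : ∀ n d, (1 : ℝ) - X n d ≠ X n d := by
      intro n d; rcases hX n d with hx | hx <;> rw [hx] <;> norm_num
    have hflip : ∀ n d, Xt n d ≠ X n d ↔ (n, d) ∈ F := by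
      intro n d
      by_cases hmem : (n, d) ∈ F <;> simp [hXt, hmem, hne1 n d]
    have hmemX : Xt ∈ XsetBin X q Q := by
      refine ⟨?_, ?_, ?_⟩
      · intro n d
        rcases hX n d with hx | hx <;> by_cases hmem : (n, d) ∈ F <;> simp [hXt, hmem, hx]
      · have hset : (Finset.univ.filter fun p : Fin N × Fin D => Xt p.1 p.2 ≠ X p.1 p.2) = F := by
          ext p
          simp only [Finset.mem_filter, Finset.mem_univ, true_and]
          exact hflip p.1 p.2
        rw [hset]
        calc F.card ≤ (T'.filter P).card := Finset.card_image_le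
          _ ≤ T'.card := Finset.card_filter_le _ _
          _ = min Q (N * q) := hT'card
          _ ≤ Q := min_le_left _ _
      · intro n
        have hsub : (Finset.univ.filter fun d => Xt n d ≠ X n d)
            ⊆ Finset.image (fun i : Fin q => e n (Fin.castLE hqD i)) Finset.univ := by
          intro d hd
          simp only [Finset.mem_filter, Finset.mem_univ, true_and] at hd
          rw [hflip, hF, Finset.mem_image] at hd
          obtain ⟨p, hp, hpe⟩ := hd
          simp only [hφ, Prod.mk.injEq] at hpe
          obtain ⟨hpe1, hpe2⟩ := hpe
          subst hpe1
          exact Finset.mem_image.2 ⟨p.2, Finset.mem_univ _, hpe2⟩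
        calc (Finset.univ.filter fun d => Xt n d ≠ X n d).card
            ≤ (Finset.image (fun i : Fin q => e n (Fin.castLE hqD i)) Finset.univ).card :=
              Finset.card_le_card hsub
          _ ≤ (Finset.univ : Finset (Fin q)).card := Finset.card_image_le
          _ = q := by simp
    refine ⟨Xt, hmemX, ?_⟩
    have h1 : (A * Xt * W) m j - (A * X * W) m j
        = ∑ p ∈ F, A m p.1 * (1 - 2 * X p.1 p.2) * W p.2 j := by
      rw [hentry Xt, hentry X, ← Finset.sum_sub_distrib]
      simp_rw [← Finset.sum_sub_distrib]
      have hterm2 : ∀ n d, A m n * Xt n d * W d j - A m n * X n d * W d j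
          = if (n, d) ∈ F then A m n * (1 - 2 * X n d) * W d j else 0 := by
        intro n d
        by_cases hmem : (n, d) ∈ F <;> simp [hXt, hmem] <;> ring
      simp_rw [hterm2]
      have hFrw : ∑ p ∈ F, A m p.1 * (1 - 2 * X p.1 p.2) * W p.2 j
          = ∑ p : Fin N × Fin D, if p ∈ F then A m p.1 * (1 - 2 * X p.1 p.2) * W p.2 j else 0 := by
        rw [Finset.sum_ite_mem, Finset.univ_inter]
      rw [hFrw, Fintype.sum_prod_type]
    have h2 : ∑ p ∈ F, A m p.1 * (1 - 2 * X p.1 p.2) * W p.2 j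
        = ∑ p ∈ T'.filter P, A m p.1 * (1 - 2 * X p.1 (e p.1 (Fin.castLE hqD p.2)))
            * W (e p.1 (Fin.castLE hqD p.2)) j := by
      rw [hF, Finset.sum_image (fun p _ p' _ hpe => hφinj hpe)]
    have h3 : ∀ p ∈ T'.filter P,
        A m p.1 * (1 - 2 * X p.1 (e p.1 (Fin.castLE hqD p.2)))
          * W (e p.1 (Fin.castLE hqD p.2)) j
        = -(A m p.1 * Rhat p.1 j p.2) := by
      rintro ⟨n, i⟩ hp
      simp only [Finset.mem_filter, hP] at hp
      have hPne := hp.2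
      set d := e n (Fin.castLE hqD i) with hd
      have hRv : Rhat n j i = vhat n j d := he2 n i
      have hvne : vhat n j d ≠ 0 := by
        intro h0
        exact hPne (by rw [hRv, h0, mul_zero])
      have hveq := hvhat n j d
      rw [hveq] at hvne
      rcases hX n d with hx | hx
      · rw [hx] at hveq hvne ⊢
        simp only [zero_mul, sub_zero, one_mul, zero_add] at hveq hvne
        have hW : W d j < 0 := by
          by_contra hc
          push_neg at hc
          rw [max_eq_right (by linarith : -W d j ≤ 0)] at hvne
          exact hvne rfl
        rw [hRv, hveq, max_eq_left (by linarith : (0 : ℝ) ≤ -W d j)]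
        ring
      · rw [hx] at hveq hvne ⊢
        simp only [one_mul, sub_self, zero_mul, add_zero] at hveq hvne
        have hW : 0 < W d j := by
          by_contra hc
          push_neg at hc
          rw [max_eq_right hc] at hvne
          exact hvne rfl
        rw [hRv, hveq, max_eq_left hW.le]
        ring
    have h4 : ∑ p ∈ T'.filter P, (-(A m p.1 * Rhat p.1 j p.2)) = -topsum := by
      rw [Finset.sum_neg_distrib, neg_inj, hT'sum, Finset.sum_filter]
      refine Finset.sum_congr rfl fun p _ => ?_
      by_cases hp : P p
      · rw [if_pos hp]
      · rw [if_neg hp]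
        rw [hP] at hp
        exact (not_not.mp hp).symm
    have hval : (A * Xt * W) m j = (A * X * W) m j - topsum := by
      have := h1.trans (h2.trans ((Finset.sum_congr rfl h3).trans h4))
      linarith
    rw [hval, hReq]
    ring
end

section
/- Closed form for maximizing a linear functional over the L0-constrained binary perturbation set: Let X ∈ {0,1}^{N×D} be binary, c an N×D real matrix, and define Δ_{nd} := [c_{nd}]₊·(1 − X_{nd}) + [c_{nd}]₋·X_{nd} (which is nonnegative). With S_n and S_Q chosen for this Δ as in the context, let P := {(n,d) ∈ S_Q : Δ_{nd} > 0} and let X̃* be the binary matrix obtained from X by flipping exactly the entries indexed by P (X̃*_{nd} = 1 − X_{nd} for (n,d) ∈ P and X̃*_{nd} = X_{nd} otherwise). Then X̃* ∈ X_{q,Q}(X), and max_{X̃ ∈ X_{q,Q}(X)} Σ_{n,d} c_{nd}·(X̃_{nd} − X_{nd}) = Σ_{(n,d) ∈ S_Q} Δ_{nd}, attained at X̃ = X̃*. -/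
open scoped BigOperators

/-- Auxiliary: a sum over `A` is dominated by the sum over some same-cardinality
subset of `B`, when elements of `A` outside `B` are dominated by all elements of `B`. -/
lemma aux_exists_subset_sum_le {α : Type*} [DecidableEq α] (f : α → ℝ) (A B : Finset α)
    (hcard : A.card ≤ B.card)
    (htop : ∀ a ∈ A, a ∉ B → ∀ b ∈ B, f a ≤ f b) :
    ∃ C ⊆ B, C.card = A.card ∧ ∑ a ∈ A, f a ≤ ∑ c ∈ C, f c := by
  have hc1 : (A ∩ B).card + (A \ B).card = A.card := Finset.card_inter_add_card_sdiff A B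
  have hc2 : (B ∩ A).card + (B \ A).card = B.card := Finset.card_inter_add_card_sdiff B A
  have hca : (A \ B).card ≤ (B \ A).card := by
    rw [Finset.inter_comm] at hc2; omega
  obtain ⟨C', hC'sub, hC'card⟩ := Finset.exists_subset_card_eq hca
  by_cases hAB : A \ B = ∅
  · refine ⟨A, ?_, rfl, le_refl _⟩
    intro a ha
    by_contra hnb
    exact (Finset.notMem_empty a) (hAB ▸ Finset.mem_sdiff.2 ⟨ha, hnb⟩)
  · have hne : (B \ A).Nonempty := by
      rw [← Finset.card_pos]
      have := Finset.card_pos.2 (Finset.nonempty_iff_ne_empty.2 hAB)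
      omega
    set m := (B \ A).inf' hne f with hm
    have hsum1 : ∑ a ∈ A \ B, f a ≤ (A \ B).card • m := by
      apply Finset.sum_le_card_nsmul
      intro a ha
      rw [Finset.mem_sdiff] at ha
      apply Finset.le_inf'
      intro b hb
      rw [Finset.mem_sdiff] at hb
      exact htop a ha.1 ha.2 b hb.1
    have hsum2 : C'.card • m ≤ ∑ c ∈ C', f c := by
      apply Finset.card_nsmul_le_sum
      intro c hc
      exact Finset.inf'_le f (hC'sub hc)
    have hdisj : Disjoint (A ∩ B) C' := by
      apply Finset.disjoint_left.2
      intro a ha hc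
      exact (Finset.mem_sdiff.1 (hC'sub hc)).2 (Finset.mem_inter.1 ha).1
    refine ⟨(A ∩ B) ∪ C', ?_, ?_, ?_⟩
    · apply Finset.union_subset (Finset.inter_subset_right)
      exact hC'sub.trans (Finset.sdiff_subset)
    · rw [Finset.card_union_of_disjoint hdisj, hC'card]; omega
    · rw [Finset.sum_union hdisj]
      have : ∑ a ∈ A, f a = ∑ a ∈ A ∩ B, f a + ∑ a ∈ A \ B, f a := by
        rw [Finset.sum_inter_add_sum_sdiff]
      rw [this]
      have := hsum1.trans (hC'card ▸ hsum2)
      linarith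

/-- Auxiliary: sum over `A` is at most sum over `B` when `|A| ≤ |B|`, `f ≥ 0` on `B`,
and elements of `A` outside `B` are dominated by all elements of `B`. -/
lemma aux_sum_le_sum_top {α : Type*} [DecidableEq α] (f : α → ℝ) (A B : Finset α)
    (hcard : A.card ≤ B.card) (hf : ∀ b ∈ B, 0 ≤ f b)
    (htop : ∀ a ∈ A, a ∉ B → ∀ b ∈ B, f a ≤ f b) :
    ∑ a ∈ A, f a ≤ ∑ b ∈ B, f b := by
  obtain ⟨C, hCsub, _, hCsum⟩ := aux_exists_subset_sum_le f A B hcard htop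
  exact hCsum.trans (Finset.sum_le_sum_of_subset_of_nonneg hCsub fun b hb _ => hf b hb)

/-- **Closed form for maximizing a linear functional over the `L0`-constrained binary
perturbation set.**  Let `X ∈ {0,1}^{N×D}`, `c` a real `N×D` matrix, and
`Δ_{nd} = [c_{nd}]₊·(1 − X_{nd}) + [c_{nd}]₋·X_{nd} ≥ 0`.  With `Sn` the per-row
top-`q` columns of `Δ`, `SQ` the overall top-`Q` pairs among them,
`P = {(n,d) ∈ SQ : Δ_{nd} > 0}`, and `X̃*` obtained from `X` by flipping exactly the
entries in `P`, we have `X̃* ∈ X_{q,Q}(X)` and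
`max_{X̃ ∈ X_{q,Q}(X)} Σ_{n,d} c_{nd}(X̃_{nd} − X_{nd}) = Σ_{(n,d)∈SQ} Δ_{nd}`,
attained at `X̃ = X̃*`. -/
theorem linear_max_over_L0_ball {N D : ℕ} (q Q : ℕ) (hqD : q ≤ D) (hQN : Q ≤ N * q)
    (X c : Matrix (Fin N) (Fin D) ℝ) (hX : ∀ n d, X n d = 0 ∨ X n d = 1)
    (Δ : Matrix (Fin N) (Fin D) ℝ)
    (hΔ : ∀ n d, Δ n d = max (c n d) 0 * (1 - X n d) + max (-c n d) 0 * X n d)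
    (Sn : Fin N → Finset (Fin D)) (hSncard : ∀ n, (Sn n).card = q)
    (hSntop : ∀ n, ∀ d ∈ Sn n, ∀ d' ∉ Sn n, Δ n d' ≤ Δ n d)
    (SQ : Finset (Fin N × Fin D)) (hSQcard : SQ.card = Q)
    (hSQsub : ∀ p ∈ SQ, p.2 ∈ Sn p.1)
    (hSQtop : ∀ p ∈ SQ, ∀ p' : Fin N × Fin D, p'.2 ∈ Sn p'.1 → p' ∉ SQ →
      Δ p'.1 p'.2 ≤ Δ p.1 p.2)
    (Xtstar : Matrix (Fin N) (Fin D) ℝ)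
    (hXtstar : ∀ n d,
      Xtstar n d = if (n, d) ∈ SQ ∧ 0 < Δ n d then 1 - X n d else X n d) :
    Xtstar ∈ XsetBin X q Q ∧
    IsGreatest {v : ℝ | ∃ Xt ∈ XsetBin X q Q,
        v = ∑ n, ∑ d, c n d * (Xt n d - X n d)}
      (∑ p ∈ SQ, Δ p.1 p.2) ∧
    (∑ n, ∑ d, c n d * (Xtstar n d - X n d)) = ∑ p ∈ SQ, Δ p.1 p.2 := by
  -- `Δ` is the positive part of the gain from flipping an entry
  have key : ∀ n d, Δ n d = max (c n d * (1 - 2 * X n d)) 0 := by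
    intro n d
    rcases hX n d with h | h <;> rw [hΔ n d, h] <;> ring_nf
  have hΔnn : ∀ n d, 0 ≤ Δ n d := fun n d => (key n d) ▸ le_max_right _ _
  -- membership of `Xtstar`
  have hbin : ∀ n d, Xtstar n d = 0 ∨ Xtstar n d = 1 := by
    intro n d
    rw [hXtstar n d]
    split
    · rcases hX n d with h | h <;> rw [h] <;> norm_num
    · exact hX n d
  have hdiff : ∀ n d, Xtstar n d ≠ X n d ↔ ((n, d) ∈ SQ ∧ 0 < Δ n d) := by
    intro n d
    rw [hXtstar n d]
    constructor
    · intro h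
      by_contra hc
      rw [if_neg hc] at h
      exact h rfl
    · intro h
      rw [if_pos h]
      rcases hX n d with h' | h' <;> rw [h'] <;> norm_num
  have hmem : Xtstar ∈ XsetBin X q Q := by
    refine ⟨hbin, ?_, ?_⟩
    · rw [← hSQcard]
      apply Finset.card_le_card
      intro p hp
      rw [Finset.mem_filter] at hp
      exact ((hdiff p.1 p.2).1 hp.2).1
    · intro n
      rw [← hSncard n]
      apply Finset.card_le_card
      intro d hd
      rw [Finset.mem_filter] at hd
      exact hSQsub _ ((hdiff n d).1 hd.2).1
  -- the value attained at `Xtstar`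
  have hval : (∑ n, ∑ d, c n d * (Xtstar n d - X n d)) = ∑ p ∈ SQ, Δ p.1 p.2 := by
    have hterm : ∀ n d, c n d * (Xtstar n d - X n d)
        = if (n, d) ∈ SQ then Δ n d else 0 := by
      intro n d
      rw [hXtstar n d]
      by_cases h1 : (n, d) ∈ SQ
      · by_cases h2 : 0 < Δ n d
        · rw [if_pos ⟨h1, h2⟩, if_pos h1]
          have : Δ n d = c n d * (1 - 2 * X n d) := by
            rw [key n d] at h2 ⊢
            rcases max_cases (c n d * (1 - 2 * X n d)) 0 with ⟨he, _⟩ | ⟨he, hl⟩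
            · exact he
            · linarith
          rw [this]; ring
        · have : Δ n d = 0 := le_antisymm (not_lt.1 h2) (hΔnn n d)
          rw [if_neg (fun hc => h2 hc.2), if_pos h1, this]
          ring
      · rw [if_neg (fun hc => h1 hc.1), if_neg h1]
        ring
    calc (∑ n, ∑ d, c n d * (Xtstar n d - X n d))
        = ∑ p : Fin N × Fin D, (if p ∈ SQ then Δ p.1 p.2 else 0) := by
          rw [Fintype.sum_prod_type]
          exact Finset.sum_congr rfl fun n _ => Finset.sum_congr rfl fun d _ => hterm n d
      _ = ∑ p ∈ SQ, Δ p.1 p.2 := by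
          rw [Finset.sum_ite_mem, Finset.univ_inter]
  -- upper bound over the whole admissible set
  have hub : ∀ Xt ∈ XsetBin X q Q,
      (∑ n, ∑ d, c n d * (Xt n d - X n d)) ≤ ∑ p ∈ SQ, Δ p.1 p.2 := by
    rintro Xt ⟨hb, hQc, hqc⟩
    set Tn : Fin N → Finset (Fin D) :=
      fun n => Finset.univ.filter fun d : Fin D => Xt n d ≠ X n d with hTn
    -- pointwise bound by Δ on the difference set
    have step1 : (∑ n, ∑ d, c n d * (Xt n d - X n d)) ≤ ∑ n, ∑ d ∈ Tn n, Δ n d := by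
      apply Finset.sum_le_sum
      intro n _
      rw [Finset.sum_filter]
      apply Finset.sum_le_sum
      intro d _
      by_cases h : Xt n d ≠ X n d
      · rw [if_pos h]
        have hx : Xt n d - X n d = 1 - 2 * X n d := by
          rcases hb n d with h1 | h1 <;> rcases hX n d with h2 | h2 <;>
            rw [h1, h2] <;> first | (exfalso; rw [h1, h2] at h; exact h rfl) | norm_num
        rw [hx, key n d]
        exact le_max_left _ _
      · rw [if_neg h]
        push_neg at h
        rw [h]; simp
    -- per-row move into `Sn n`
    have hrow : ∀ n, ∃ C ⊆ Sn n, C.card = (Tn n).card ∧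
        ∑ d ∈ Tn n, Δ n d ≤ ∑ d ∈ C, Δ n d := by
      intro n
      apply aux_exists_subset_sum_le
      · rw [hSncard n]; exact hqc n
      · intro a _ ha b hbb
        exact hSntop n b hbb a ha
    choose C hCsub hCcard hCsum using hrow
    set T' : Finset (Fin N × Fin D) :=
      Finset.univ.biUnion (fun n => (C n).image fun d => (n, d)) with hT'
    have hdisj : ∀ n ∈ (Finset.univ : Finset (Fin N)), ∀ m ∈ (Finset.univ : Finset (Fin N)),
        n ≠ m → Disjoint ((C n).image fun d => (n, d)) ((C m).image fun d => (m, d)) := by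
      intro n _ m _ hnm
      apply Finset.disjoint_left.2
      intro p hp hq
      obtain ⟨d1, _, rfl⟩ := Finset.mem_image.1 hp
      obtain ⟨d2, _, he⟩ := Finset.mem_image.1 hq
      exact hnm (congrArg Prod.fst he).symm
    have hT'mem : ∀ p ∈ T', p.2 ∈ Sn p.1 := by
      intro p hp
      obtain ⟨n, _, hpn⟩ := Finset.mem_biUnion.1 hp
      obtain ⟨d, hd, rfl⟩ := Finset.mem_image.1 hpn
      exact hCsub n hd
    have hT'sum : ∑ p ∈ T', Δ p.1 p.2 = ∑ n, ∑ d ∈ C n, Δ n d := by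
      rw [Finset.sum_biUnion]
      · apply Finset.sum_congr rfl
        intro n _
        rw [Finset.sum_image]
        intro a _ b _ h
        exact congrArg Prod.snd h
      · intro n hn m hm hnm
        exact hdisj n hn m hm hnm
    have hT'card : T'.card ≤ Q := by
      rw [Finset.card_biUnion hdisj]
      have himg : ∀ n, ((C n).image fun d => (n, d)).card = (Tn n).card := by
        intro n
        rw [Finset.card_image_of_injective _ (fun a b h => congrArg Prod.snd h),
          hCcard n]
      rw [Finset.sum_congr rfl fun n _ => himg n]
      have hTcard : ∑ n, (Tn n).card
          = (Finset.univ.filter fun p : Fin N × Fin D => Xt p.1 p.2 ≠ X p.1 p.2).card := by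
        rw [Finset.card_filter, Fintype.sum_prod_type]
        apply Finset.sum_congr rfl
        intro n _
        rw [hTn, Finset.card_filter]
      rw [hTcard]
      exact hQc
    -- pass to the global top-`Q` set
    have step3 : ∑ p ∈ T', Δ p.1 p.2 ≤ ∑ p ∈ SQ, Δ p.1 p.2 := by
      apply aux_sum_le_sum_top
      · rw [hSQcard]; exact hT'card
      · intro b _; exact hΔnn b.1 b.2
      · intro a ha hanot b hbb
        exact hSQtop b hbb a (hT'mem a ha) hanot
    calc (∑ n, ∑ d, c n d * (Xt n d - X n d))
        ≤ ∑ n, ∑ d ∈ Tn n, Δ n d := step1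
      _ ≤ ∑ n, ∑ d ∈ C n, Δ n d := Finset.sum_le_sum fun n _ => hCsum n
      _ = ∑ p ∈ T', Δ p.1 p.2 := hT'sum.symm
      _ ≤ ∑ p ∈ SQ, Δ p.1 p.2 := step3
  refine ⟨hmem, ⟨⟨Xtstar, hmem, hval.symm⟩, ?_⟩, hval⟩
  rintro v ⟨Xt, hXt, rfl⟩
  exact hub Xt hXt
end

section
/- Interval bound propagation through a GNN layer: Let A be a real matrix with nonnegative entries, W a real matrix, and H, R', S' real matrices of equal shape and compatible dimensions with R' ≤ H ≤ S' entrywise. Then, entrywise, A·(R'·[W]₊ − S'·[W]₋) ≤ A·H·W ≤ A·(S'·[W]₊ − R'·[W]₋), where [W]₊ and [W]₋ denote the entrywise positive part max(W,0) and entrywise negative part −min(W,0) of W. -/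
open scoped BigOperators

theorem inner_bound {n p r : ℕ}
    (W : Matrix (Fin p) (Fin r) ℝ)
    (H R' S' : Matrix (Fin n) (Fin p) ℝ)
    (hRH : ∀ i j, R' i j ≤ H i j) (hHS : ∀ i j, H i j ≤ S' i j)
    (k : Fin n) (j : Fin r) :
    (R' * W.map (fun x => max x 0) - S' * W.map (fun x => max (-x) 0)) k j ≤ (H * W) k j ∧
    (H * W) k j ≤ (S' * W.map (fun x => max x 0) - R' * W.map (fun x => max (-x) 0)) k j := by
  simp only [Matrix.sub_apply, Matrix.mul_apply, Matrix.map_apply, ← Finset.sum_sub_distrib]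
  constructor <;> apply Finset.sum_le_sum <;> intro l _ <;>
  · have h1 : max (W l j) 0 - max (-(W l j)) 0 = W l j := by
      rcases le_total (W l j) 0 with h | h
      · rw [max_eq_right h, max_eq_left (neg_nonneg.2 h)]; ring
      · rw [max_eq_left h, max_eq_right (neg_nonpos.2 h)]; ring
    have p1 : (0:ℝ) ≤ max (W l j) 0 := le_max_right _ _
    have p2 : (0:ℝ) ≤ max (-(W l j)) 0 := le_max_right _ _
    have h2 : H k l * W l j
        = H k l * max (W l j) 0 - H k l * max (-(W l j)) 0 := by
      rw [← mul_sub, h1]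
    rw [h2]
    have := mul_le_mul_of_nonneg_right (hRH k l) p1
    have := mul_le_mul_of_nonneg_right (hHS k l) p1
    have := mul_le_mul_of_nonneg_right (hRH k l) p2
    have := mul_le_mul_of_nonneg_right (hHS k l) p2
    linarith

/-- **Interval bound propagation through a GNN layer.**  Let `A` be an
entrywise-nonnegative real matrix, `W` a real matrix, and `H`, `R'`, `S'` real
matrices of equal shape with `R' ≤ H ≤ S'` entrywise.  Then, entrywise,
`A·(R'·[W]₊ − S'·[W]₋) ≤ A·H·W ≤ A·(S'·[W]₊ − R'·[W]₋)`, where `[W]₊ = max(W,0)` and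
`[W]₋ = −min(W,0)` are the entrywise positive and negative parts of `W`. -/
theorem interval_bound_propagation {m n p r : ℕ}
    (A : Matrix (Fin m) (Fin n) ℝ) (hA : ∀ i j, 0 ≤ A i j)
    (W : Matrix (Fin p) (Fin r) ℝ)
    (H R' S' : Matrix (Fin n) (Fin p) ℝ)
    (hRH : ∀ i j, R' i j ≤ H i j) (hHS : ∀ i j, H i j ≤ S' i j) :
    ∀ (i : Fin m) (j : Fin r),
      (A * (R' * W.map (fun x => max x 0) - S' * W.map (fun x => max (-x) 0))) i j ≤
        (A * H * W) i j ∧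
      (A * H * W) i j ≤
        (A * (S' * W.map (fun x => max x 0) - R' * W.map (fun x => max (-x) 0))) i j := by
  intro i j
  rw [Matrix.mul_assoc]
  constructor <;>
  · simp only [Matrix.mul_apply (M := A)]
    apply Finset.sum_le_sum
    intro k _
    have h := inner_bound W H R' S' hRH hHS k j
    exact mul_le_mul_of_nonneg_left (by tauto) (hA i k)
end

section
/- Feasibility of the exact forward pass in the relaxed constraint set: Let X̃ ∈ X̂_{q,Q}(X) and suppose the exact forward-pass pre-activations of the sliced ReLU GNN at input X̃ satisfy R^{(l)} ≤ Ĥ^{(l)}(X̃) ≤ S^{(l)} entrywise for all l = 2,…,L−1. Then the tuple of exact activations (H^{(1)}(X̃),…,H^{(L−1)}(X̃), Ĥ^{(2)}(X̃),…,Ĥ^{(L)}(X̃)), with H^{(l)}(X̃) = max(Ĥ^{(l)}(X̃), 0) entrywise, belongs to the relaxed constraint set Z(X̃). Consequently, inf{ c · Ĥ^{(L)} : X̃' ∈ X̂_{q,Q}(X), (H,Ĥ) ∈ Z(X̃') } ≤ c · f(X̃) for every c ∈ ℝ^K. -/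
open scoped BigOperators

/-- Per-layer constant bound used in the boundedness argument. -/
noncomputable def myB {ℓ : ℕ} (net : SlicedGNN ℓ)
    (R S : (l : ℕ) → Matrix (Fin (net.nd l)) (Fin (net.fd l)) ℝ) : ℕ → ℝ
  | 0 => 1
  | k + 1 =>
      myB net R S k *
          (∑ i, ∑ j, (∑ m, |net.A (k + 1) i m|) * (∑ p, |net.W (k + 1) p j|)) +
        (∑ j, |net.b (k + 1) j|) + (∑ i, ∑ j, (|R (k + 2) i j| + |S (k + 2) i j|))

lemma myB_nonneg {ℓ : ℕ} (net : SlicedGNN ℓ)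
    (R S : (l : ℕ) → Matrix (Fin (net.nd l)) (Fin (net.fd l)) ℝ) :
    ∀ k, 0 ≤ myB net R S k := by
  intro k
  induction k with
  | zero => norm_num [myB]
  | succ k ih =>
      simp only [myB]
      have h1 : (0:ℝ) ≤ ∑ i, ∑ j, (∑ m, |net.A (k + 1) i m|) * (∑ p, |net.W (k + 1) p j|) := by
        positivity
      have h2 : (0:ℝ) ≤ ∑ j, |net.b (k + 1) j| := by positivity
      have h3 : (0:ℝ) ≤ ∑ i, ∑ j, (|R (k + 2) i j| + |S (k + 2) i j|) := by positivity
      nlinarith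

lemma pre_abs_bound {ℓ : ℕ} (net : SlicedGNN ℓ) (k : ℕ)
    (H : Matrix (Fin (net.nd (k + 1))) (Fin (net.fd (k + 1))) ℝ) (Bk : ℝ) (hBk : 0 ≤ Bk)
    (hH : ∀ i j, |H i j| ≤ Bk) (i : Fin (net.nd (k + 2))) (j : Fin (net.fd (k + 2))) :
    |(net.A (k + 1) * H * net.W (k + 1)) i j + net.b (k + 1) j| ≤
      Bk * (∑ i', ∑ j', (∑ m, |net.A (k + 1) i' m|) * (∑ p, |net.W (k + 1) p j'|)) +
        ∑ j', |net.b (k + 1) j'| := by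
  have hAHW : |(net.A (k + 1) * H * net.W (k + 1)) i j| ≤
      Bk * ((∑ m, |net.A (k + 1) i m|) * (∑ p, |net.W (k + 1) p j|)) := by
    rw [Matrix.mul_apply]
    calc |∑ p, (net.A (k + 1) * H) i p * net.W (k + 1) p j|
        ≤ ∑ p, |(net.A (k + 1) * H) i p * net.W (k + 1) p j| :=
          Finset.abs_sum_le_sum_abs _ _
      _ ≤ ∑ p, (Bk * ∑ m, |net.A (k + 1) i m|) * |net.W (k + 1) p j| := by
          apply Finset.sum_le_sum; intro p _
          rw [abs_mul]
          apply mul_le_mul_of_nonneg_right _ (abs_nonneg _)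
          rw [Matrix.mul_apply]
          calc |∑ m, net.A (k + 1) i m * H m p|
              ≤ ∑ m, |net.A (k + 1) i m * H m p| := Finset.abs_sum_le_sum_abs _ _
            _ ≤ ∑ m, |net.A (k + 1) i m| * Bk := by
                apply Finset.sum_le_sum; intro m _
                rw [abs_mul]
                exact mul_le_mul_of_nonneg_left (hH m p) (abs_nonneg _)
            _ = Bk * ∑ m, |net.A (k + 1) i m| := by rw [← Finset.sum_mul, mul_comm]
      _ = Bk * ((∑ m, |net.A (k + 1) i m|) * (∑ p, |net.W (k + 1) p j|)) := by
          rw [← Finset.mul_sum]; ring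
  have hterm : (∑ m, |net.A (k + 1) i m|) * (∑ p, |net.W (k + 1) p j|) ≤
      ∑ i', ∑ j', (∑ m, |net.A (k + 1) i' m|) * (∑ p, |net.W (k + 1) p j'|) := by
    calc (∑ m, |net.A (k + 1) i m|) * (∑ p, |net.W (k + 1) p j|)
        ≤ ∑ j', (∑ m, |net.A (k + 1) i m|) * (∑ p, |net.W (k + 1) p j'|) := by
          apply Finset.single_le_sum (f := fun j' =>
            (∑ m, |net.A (k + 1) i m|) * (∑ p, |net.W (k + 1) p j'|))
          · intro j' _; positivity
          · exact Finset.mem_univ j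
      _ ≤ ∑ i', ∑ j', (∑ m, |net.A (k + 1) i' m|) * (∑ p, |net.W (k + 1) p j'|) := by
          apply Finset.single_le_sum (f := fun i' =>
            ∑ j', (∑ m, |net.A (k + 1) i' m|) * (∑ p, |net.W (k + 1) p j'|))
          · intro i' _; positivity
          · exact Finset.mem_univ i
  have hb : |net.b (k + 1) j| ≤ ∑ j', |net.b (k + 1) j'| :=
    Finset.single_le_sum (f := fun j' => |net.b (k + 1) j'|)
      (fun j' _ => abs_nonneg _) (Finset.mem_univ j)
  calc |(net.A (k + 1) * H * net.W (k + 1)) i j + net.b (k + 1) j|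
      ≤ |(net.A (k + 1) * H * net.W (k + 1)) i j| + |net.b (k + 1) j| := abs_add_le _ _
    _ ≤ Bk * (∑ i', ∑ j', (∑ m, |net.A (k + 1) i' m|) * (∑ p, |net.W (k + 1) p j'|)) +
          ∑ j', |net.b (k + 1) j'| := by
        have := mul_le_mul_of_nonneg_left hterm hBk
        linarith

lemma InZ_bound {ℓ : ℕ} (net : SlicedGNN ℓ)
    (R S : (l : ℕ) → Matrix (Fin (net.nd l)) (Fin (net.fd l)) ℝ)
    (Xt' : Matrix (Fin (net.nd 1)) (Fin (net.fd 1)) ℝ)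
    (hXt' : ∀ n d, 0 ≤ Xt' n d ∧ Xt' n d ≤ 1)
    (Hv : (l : ℕ) → Matrix (Fin (net.nd (l + 1))) (Fin (net.fd (l + 1))) ℝ)
    (hZ : net.InZ R S Xt' Hv) :
    ∀ k, k ≤ ℓ → ∀ i j, |Hv k i j| ≤ myB net R S k := by
  intro k
  induction k with
  | zero =>
      intro _ i j
      rw [hZ.1]
      simp only [myB]
      rw [abs_le]
      constructor <;> [linarith [(hXt' i j).1]; exact (hXt' i j).2]
  | succ k ih =>
      intro hk i j
      have hkl : k < ℓ := by omega
      have ihb : ∀ i' j', |Hv k i' j'| ≤ myB net R S k := ih (by omega)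
      set Bk := myB net R S k with hBkdef
      have hBk : 0 ≤ Bk := myB_nonneg net R S k
      set T := ∑ i', ∑ j', (∑ m, |net.A (k + 1) i' m|) * (∑ p, |net.W (k + 1) p j'|) with hT
      set U := ∑ j', |net.b (k + 1) j'| with hU
      set V := ∑ i', ∑ j', (|R (k + 2) i' j'| + |S (k + 2) i' j'|) with hV
      have hBsucc : myB net R S (k + 1) = Bk * T + U + V := rfl
      have hVnn : (0:ℝ) ≤ V := by rw [hV]; positivity
      set p := (net.A (k + 1) * Hv k * net.W (k + 1)) i j + net.b (k + 1) j with hp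
      have hpre : |p| ≤ Bk * T + U := pre_abs_bound net k (Hv k) Bk hBk ihb i j
      have hBTU : (0:ℝ) ≤ Bk * T + U := le_trans (abs_nonneg _) hpre
      obtain ⟨h1, h2, h3⟩ := hZ.2 k hkl i j
      rw [hBsucc]
      rcases le_or_gt (S (k + 2) i j) 0 with hS | hS
      · rw [h1 hS]
        simpa using by linarith
      · rcases le_or_gt 0 (R (k + 2) i j) with hR | hR
        · rw [h2 hR hS, ← hp]
          linarith [hpre]
        · obtain ⟨hH0, hHp, hHS⟩ := h3 hR hS
          rw [← hp] at hHp hHS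
          have hRabs : |R (k + 2) i j| ≤ V := by
            rw [hV]
            calc |R (k + 2) i j| ≤ |R (k + 2) i j| + |S (k + 2) i j| := by linarith [abs_nonneg (S (k + 2) i j)]
              _ ≤ ∑ j', (|R (k + 2) i j'| + |S (k + 2) i j'|) :=
                  Finset.single_le_sum (f := fun j' => |R (k + 2) i j'| + |S (k + 2) i j'|)
                    (fun _ _ => by positivity) (Finset.mem_univ j)
              _ ≤ ∑ i', ∑ j', (|R (k + 2) i' j'| + |S (k + 2) i' j'|) :=
                  Finset.single_le_sum
                    (f := fun i' => ∑ j', (|R (k + 2) i' j'| + |S (k + 2) i' j'|))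
                    (fun _ _ => by positivity) (Finset.mem_univ i)
          have hRge : -V ≤ R (k + 2) i j := by
            have := abs_le.mp (le_refl |R (k + 2) i j|)
            linarith [neg_abs_le (R (k + 2) i j)]
          rw [abs_of_nonneg hH0]
          -- Hv * (S - R) ≤ S * (p - R) ≤ S * (Bk*T+U+V) ≤ (S - R) * (Bk*T+U+V)
          have hp1 : p ≤ Bk * T + U := (abs_le.mp hpre).2
          have e1 : S (k + 2) i j * (p - R (k + 2) i j) ≤
              S (k + 2) i j * (Bk * T + U + V) :=
            mul_le_mul_of_nonneg_left (by linarith) (le_of_lt hS)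
          have e2 : S (k + 2) i j * (Bk * T + U + V) ≤
              (S (k + 2) i j - R (k + 2) i j) * (Bk * T + U + V) :=
            mul_le_mul_of_nonneg_right (by linarith) (by linarith)
          have e3 : Hv (k + 1) i j * (S (k + 2) i j - R (k + 2) i j) ≤
              (Bk * T + U + V) * (S (k + 2) i j - R (k + 2) i j) := by
            nlinarith
          exact le_of_mul_le_mul_right e3 (by linarith)

/-- **Feasibility of the exact forward pass in the relaxed constraint set.**  If
`X̃ ∈ X̂_{q,Q}(X)` and the exact pre-activations at input `X̃` satisfy the bounds
`R^{(l)} ≤ Ĥ^{(l)}(X̃) ≤ S^{(l)}` for `l = 2, …, L − 1`, then the tuple of exact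
activations (with `H^{(l)}(X̃) = max(Ĥ^{(l)}(X̃), 0)` entrywise) belongs to `Z(X̃)`;
consequently, for every `c`, the relaxed optimal value is at most `c · f(X̃)`. -/
theorem exact_forward_pass_feasible {ℓ : ℕ} (net : SlicedGNN ℓ) (q Q : ℕ)
    (X : Matrix (Fin (net.nd 1)) (Fin (net.fd 1)) ℝ)
    (hX : ∀ n d, X n d = 0 ∨ X n d = 1)
    (R S : (l : ℕ) → Matrix (Fin (net.nd l)) (Fin (net.fd l)) ℝ)
    (hRS : ∀ k < ℓ, ∀ i j, R (k + 2) i j ≤ S (k + 2) i j)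
    (Xt : Matrix (Fin (net.nd 1)) (Fin (net.fd 1)) ℝ)
    (hXt : Xt ∈ XsetRel X q Q)
    (hbound : ∀ k < ℓ, ∀ i j,
      R (k + 2) i j ≤ net.pre Xt (k + 1) i j ∧ net.pre Xt (k + 1) i j ≤ S (k + 2) i j) :
    net.InZ R S Xt (net.post Xt) ∧
    ∀ c : Fin (net.fd (ℓ + 2)) → ℝ,
      sInf {v : ℝ | ∃ Xt' ∈ XsetRel X q Q,
        ∃ Hv : (l : ℕ) → Matrix (Fin (net.nd (l + 1))) (Fin (net.fd (l + 1))) ℝ,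
          net.InZ R S Xt' Hv ∧ v = cdot c (net.outZ Hv)} ≤
      cdot c (net.pre Xt (ℓ + 1)) := by
  -- Part 1: the exact forward pass is feasible.
  have hfeas : net.InZ R S Xt (net.post Xt) := by
    refine ⟨rfl, ?_⟩
    intro k hk i j
    have hpre : net.pre Xt (k + 1) i j =
        (net.A (k + 1) * net.post Xt k * net.W (k + 1)) i j + net.b (k + 1) j := rfl
    have hpost : net.post Xt (k + 1) i j =
        max ((net.A (k + 1) * net.post Xt k * net.W (k + 1)) i j + net.b (k + 1) j) 0 := rfl
    set p := (net.A (k + 1) * net.post Xt k * net.W (k + 1)) i j + net.b (k + 1) j with hpd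
    obtain ⟨hRp, hpS⟩ := hbound k hk i j
    rw [hpre] at hRp hpS
    refine ⟨?_, ?_, ?_⟩
    · intro hS
      rw [hpost]
      exact max_eq_right (by linarith)
    · intro hR hS
      rw [hpost]
      exact max_eq_left (by linarith)
    · intro hR hS
      rw [hpost]
      refine ⟨le_max_right _ _, le_max_left _ _, ?_⟩
      rcases le_or_gt 0 p with hp0 | hp0
      · rw [max_eq_left hp0]
        nlinarith
      · rw [max_eq_right (le_of_lt hp0)]
        nlinarith
  refine ⟨hfeas, ?_⟩
  intro c
  have hout : net.outZ (net.post Xt) = net.pre Xt (ℓ + 1) := rfl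
  have hmem : cdot c (net.pre Xt (ℓ + 1)) ∈
      {v : ℝ | ∃ Xt' ∈ XsetRel X q Q,
        ∃ Hv : (l : ℕ) → Matrix (Fin (net.nd (l + 1))) (Fin (net.fd (l + 1))) ℝ,
          net.InZ R S Xt' Hv ∧ v = cdot c (net.outZ Hv)} :=
    ⟨Xt, hXt, net.post Xt, hfeas, by rw [hout]⟩
  apply csInf_le _ hmem
  -- Boundedness below of the value set.
  set T := ∑ i', ∑ j', (∑ m, |net.A (ℓ + 1) i' m|) * (∑ p, |net.W (ℓ + 1) p j'|) with hT
  set U := ∑ j', |net.b (ℓ + 1) j'| with hU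
  set Bl := myB net R S ℓ with hBl
  refine ⟨-(∑ _i : Fin (net.nd (ℓ + 2)), ∑ j : Fin (net.fd (ℓ + 2)),
      |c j| * (Bl * T + U)), ?_⟩
  rintro v ⟨Xt', hXt', Hv, hZ, rfl⟩
  have hBnd : ∀ i j, |Hv ℓ i j| ≤ Bl :=
    InZ_bound net R S Xt' hXt'.1 Hv hZ ℓ le_rfl
  have hBlnn : 0 ≤ Bl := myB_nonneg net R S ℓ
  have houtb : ∀ (i : Fin (net.nd (ℓ + 2))) (j : Fin (net.fd (ℓ + 2))),
      |net.outZ Hv i j| ≤ Bl * T + U := by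
    intro i j
    have : net.outZ Hv i j = (net.A (ℓ + 1) * Hv ℓ * net.W (ℓ + 1)) i j + net.b (ℓ + 1) j := rfl
    rw [this]
    exact pre_abs_bound net ℓ (Hv ℓ) Bl hBlnn hBnd i j
  have : -(∑ _i : Fin (net.nd (ℓ + 2)), ∑ j : Fin (net.fd (ℓ + 2)), |c j| * (Bl * T + U)) =
      ∑ i : Fin (net.nd (ℓ + 2)), ∑ j : Fin (net.fd (ℓ + 2)), -(|c j| * (Bl * T + U)) := by
    simp [Finset.sum_neg_distrib]
  rw [this, cdot]
  apply Finset.sum_le_sum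
  intro i _
  apply Finset.sum_le_sum
  intro j _
  have h1 : |c j * net.outZ Hv i j| ≤ |c j| * (Bl * T + U) := by
    rw [abs_mul]
    exact mul_le_mul_of_nonneg_left (houtb i j) (abs_nonneg _)
  have := (abs_le.mp h1).1
  linarith
end
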